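/- arXiv:math/0211253 — 8 statements merged into one kernel-verified Lean document; each statement's English description precedes it below -/
import Mathlib

section
/- Suppose 0 ≤ |m| − k + 1 < k. Then the dimension of the kernel of the linear map f_{k,m} : V_{k−1} → V_k equals w(m, |m| − k + 1). -/
open Finsupp

/-- Multiindices `J : Fin n → ℕ` of total degree `j`. -/
abbrev MIdx (n j : ℕ) : Type := {J : Fin n → ℕ // ∑ i, J i = j}

/-- The complex vector space `V_j` with basis `{e_J : |J| = j}`. -/
abbrev V (n j : ℕ) : Type := MIdx n j →₀ ℂ

/-- `J + 1ᵢ` : the multiindex `J` with its `i`-th entry increased by 1. -/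
def incr {n : ℕ} (J : Fin n → ℕ) (i : Fin n) : Fin n → ℕ :=
  Function.update J i (J i + 1)

lemma sum_incr {n : ℕ} (J : Fin n → ℕ) (i : Fin n) :
    ∑ x, incr J i x = (∑ x, J x) + 1 := by
  unfold incr
  rw [Finset.sum_update_of_mem (Finset.mem_univ i),
    Finset.sum_eq_sum_sdiff_singleton_add (Finset.mem_univ i) J]
  ring

/-- The map `f_{j+1,m} : V_j → V_{j+1}`, `e_J ↦ ∑ᵢ (jᵢ+1)(mᵢ−jᵢ) e_{J+1ᵢ}`. -/
noncomputable def fMap (n : ℕ) (m : Fin n → ℕ) (j : ℕ) : V n j →ₗ[ℂ] V n (j + 1) :=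
  Finsupp.lift (V n (j + 1)) ℂ (MIdx n j) fun J =>
    ∑ i, (((J.1 i : ℂ) + 1) * ((m i : ℂ) - (J.1 i : ℂ))) •
      Finsupp.single (⟨incr J.1 i, by rw [sum_incr, J.2]⟩ : MIdx n (j + 1)) (1 : ℂ)

/-- `d(m,j)`: the number of multiindices `J` with `J i ≤ m i` for all `i` and `|J| = j`. -/
noncomputable def dCount (n : ℕ) (m : Fin n → ℕ) (j : ℤ) : ℕ :=
  Set.ncard {J : Fin n → ℕ | (∀ i, J i ≤ m i) ∧ ∑ i, (J i : ℤ) = j}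

/-- `w(m,j) = d(m,j) − d(m,j−1)`. -/
noncomputable def w (n : ℕ) (m : Fin n → ℕ) (j : ℤ) : ℤ :=
  (dCount n m j : ℤ) - (dCount n m (j - 1) : ℤ)

/-!
On `W = ⨁ⱼ Vⱼ` (all finitely supported functions of multi-indices), `f` is accompanied by
`e e_J = ∑_{jᵢ > 0} e_{J - 1ᵢ}` and `h e_J = (|m| - 2|J|) e_J`, and `(-h, f, e)` is an
`sl₂`-triple. A nonzero `x ∈ V_d` with `f x = 0` is a primitive vector of weight `2d - |m|` on
which `e` is nilpotent (it lowers the degree), so `2d - |m| ∈ ℕ`: `f` is injective on `V_d` when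
`2d < |m|`.

Looking at the coefficient of `e_{J + 1ᵢ}` in `f x` for `J` maximising `jᵢ` on the support of `x`
shows that `ker f` lies in the span of the `e_J` with `J ≤ m`, the weight space of
`L_{m₁} ⊗ ⋯ ⊗ L_{mₙ}`. On these boxes the flip `J ↦ m - J` identifies the matrix of `f` in degree
`j` with the transpose of its matrix in degree `|m| - 1 - j`. So `f`, being injective out of
degree `|m| - 1 - j < |m| / 2`, is surjective out of every degree `j ≥ |m| / 2`, and there
`dim ker f = d(m, j) - d(m, j + 1) = w(m, |m| - j)` by the same flip symmetry of `d`.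
-/

namespace IsSl2Triple.HasPrimitiveVectorWith

open LieModule

variable {R L M : Type*} [CommRing R] [LieRing L] [LieAlgebra R L] [AddCommGroup M] [Module R M]
  [LieRingModule L M] [LieModule R L M] [CharZero R] [IsDomain R] [Module.IsTorsionFree R M]
  {h e f : L} {t : IsSl2Triple h e f} {m : M} {μ : R}

lemma exists_nat_of_pow_toEnd_f_eq_zero (P : t.HasPrimitiveVectorWith m μ) {N : ℕ}
    (hN : (toEnd R L M f ^ N) m = 0) : ∃ n : ℕ, μ = n := by
  obtain ⟨n, hn, hn'⟩ := Nat.exists_not_and_succ_of_not_zero_of_exists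
    (p := fun k => (toEnd R L M f ^ k) m = 0) P.ne_zero ⟨N, hN⟩
  refine ⟨n, ?_⟩
  have := P.lie_e_pow_succ_toEnd_f n
  rw [hn', lie_zero, eq_comm, smul_eq_zero_iff_left hn, mul_eq_zero, sub_eq_zero] at this
  exact this.resolve_left (Nat.cast_add_one_ne_zero n)

end IsSl2Triple.HasPrimitiveVectorWith

lemma LinearMap.finrank_range_eq_rank_toMatrix {R M₁ M₂ ι κ : Type*} [CommSemiring R]
    [AddCommMonoid M₁] [AddCommMonoid M₂] [Module R M₁] [Module R M₂] [Fintype ι] [Finite κ]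
    [DecidableEq ι] (v₁ : Module.Basis ι R M₁) (v₂ : Module.Basis κ R M₂) (φ : M₁ →ₗ[R] M₂) :
    Module.finrank R (LinearMap.range φ) = (LinearMap.toMatrix v₁ v₂ φ).rank := by
  rw [Matrix.rank_eq_finrank_range_toLin _ v₂ v₁, Matrix.toLin_toMatrix]

namespace VermaDual

variable {n : ℕ}

def decr (J : Fin n → ℕ) (i : Fin n) : Fin n → ℕ :=
  Function.update J i (J i - 1)

lemma incr_apply (J : Fin n → ℕ) (i a : Fin n) : incr J i a = J a + if a = i then 1 else 0 := by
  rcases eq_or_ne a i with rfl | h <;> simp [incr, *]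

lemma decr_apply (J : Fin n → ℕ) (i a : Fin n) : decr J i a = J a - if a = i then 1 else 0 := by
  rcases eq_or_ne a i with rfl | h <;> simp [decr, *]

lemma decr_incr (J : Fin n → ℕ) (i : Fin n) : decr (incr J i) i = J := by
  funext a; simp only [decr_apply, incr_apply]; split_ifs <;> omega

lemma incr_decr {J : Fin n → ℕ} {i : Fin n} (h : J i ≠ 0) : incr (decr J i) i = J := by
  funext a
  rcases eq_or_ne a i with rfl | ha
  · simp only [decr_apply, incr_apply, if_true]; omega
  · simp [decr_apply, incr_apply, ha]

lemma decr_incr_comm (J : Fin n → ℕ) {i i' : Fin n} (h : i ≠ i') :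
    decr (incr J i) i' = incr (decr J i') i := by
  funext a; simp only [decr_apply, incr_apply]; split_ifs <;> omega

lemma incr_injective (i : Fin n) : Function.Injective (incr · i) := fun J J' h => by
  simpa only [decr_incr] using congrArg (decr · i) h

lemma lt_of_incr_eq_incr {J J' : Fin n → ℕ} {i i' : Fin n} (h : incr J' i' = incr J i)
    (hi : i' ≠ i) : J i < J' i := by
  have := congr_fun h i
  simp only [incr_apply, hi.symm, if_false, if_true] at this
  omega

-- Integer-valued, so that lowering the degree `0` part gives the degree `-1` part, which is `⊥`.
def degree (J : Fin n → ℕ) : ℤ := ∑ i, (J i : ℤ)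

lemma degree_incr (J : Fin n → ℕ) (i : Fin n) : degree (incr J i) = degree J + 1 := by
  simp only [degree, ← Nat.cast_sum, sum_incr]; push_cast; rfl

lemma degree_decr {J : Fin n → ℕ} {i : Fin n} (h : J i ≠ 0) : degree (decr J i) = degree J - 1 := by
  have := degree_incr (decr J i) i
  rw [incr_decr h] at this
  omega

def lowerCoeff (m J : Fin n → ℕ) (i : Fin n) : ℂ := ((J i : ℂ) + 1) * ((m i : ℂ) - (J i : ℂ))

abbrev W (n : ℕ) : Type := (Fin n → ℕ) →₀ ℂ

noncomputable def lowerAt (m : Fin n → ℕ) (i : Fin n) : Module.End ℂ (W n) :=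
  linearCombination ℂ fun J => lowerCoeff m J i • single (incr J i) (1 : ℂ)

noncomputable def raiseAt (i : Fin n) : Module.End ℂ (W n) :=
  linearCombination ℂ fun J => if J i = 0 then 0 else single (decr J i) (1 : ℂ)

noncomputable def lowerOp (m : Fin n → ℕ) : Module.End ℂ (W n) := ∑ i, lowerAt m i

noncomputable def raiseOp (n : ℕ) : Module.End ℂ (W n) := ∑ i, raiseAt i

noncomputable def weightOp (m : Fin n → ℕ) : Module.End ℂ (W n) :=
  linearCombination ℂ fun J => ((∑ i, m i : ℕ) - 2 * degree J : ℂ) • single J (1 : ℂ)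

@[simp] lemma lowerAt_single (m : Fin n → ℕ) (i : Fin n) (J : Fin n → ℕ) (c : ℂ) :
    lowerAt m i (single J c) = single (incr J i) (c * lowerCoeff m J i) := by
  simp [lowerAt, mul_comm, -single_mul]

@[simp] lemma raiseAt_single (i : Fin n) (J : Fin n → ℕ) (c : ℂ) :
    raiseAt i (single J c) = if J i = 0 then 0 else single (decr J i) c := by
  by_cases h : J i = 0 <;> simp [raiseAt, h]

@[simp] lemma weightOp_single (m : Fin n → ℕ) (J : Fin n → ℕ) (c : ℂ) :
    weightOp m (single J c) = single J (c * ((∑ i, m i : ℕ) - 2 * degree J : ℂ)) := by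
  simp only [weightOp, linearCombination_single, smul_single, smul_eq_mul, mul_one]

lemma raiseAt_lowerAt_comm (m : Fin n → ℕ) {i i' : Fin n} (h : i ≠ i') (x : W n) :
    raiseAt i' (lowerAt m i x) = lowerAt m i (raiseAt i' x) := by
  suffices raiseAt i' ∘ₗ lowerAt m i = lowerAt m i ∘ₗ raiseAt i' from LinearMap.congr_fun this x
  refine lhom_ext fun J c => ?_
  have hcoeff : lowerCoeff m (decr J i') i = lowerCoeff m J i := by
    simp [lowerCoeff, decr_apply, h]
  by_cases hJ : J i' = 0
  · simp [incr_apply, h.symm, hJ, -single_mul]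
  · simp [incr_apply, h.symm, hJ, hcoeff, decr_incr_comm J h, -single_mul]

lemma raiseAt_lowerAt_sub_lowerAt_raiseAt_single (m : Fin n → ℕ) (i : Fin n) (J : Fin n → ℕ)
    (c : ℂ) : raiseAt i (lowerAt m i (single J c)) - lowerAt m i (raiseAt i (single J c)) =
      single J (c * ((m i : ℂ) - 2 * J i)) := by
  rw [lowerAt_single, raiseAt_single, raiseAt_single, decr_incr]
  by_cases hJ : J i = 0
  · simp [incr_apply, hJ, lowerCoeff]
  · simp only [incr_apply, hJ, if_true, if_false, Nat.add_one_ne_zero, lowerAt_single,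
      incr_decr hJ, ← single_sub, lowerCoeff, decr_apply]
    congr 1
    push_cast [Nat.cast_sub (Nat.one_le_iff_ne_zero.mpr hJ)]
    ring

lemma raiseOp_lowerOp_sub_lowerOp_raiseOp (m : Fin n → ℕ) (x : W n) :
    raiseOp n (lowerOp m x) - lowerOp m (raiseOp n x) = weightOp m x := by
  suffices raiseOp n ∘ₗ lowerOp m - lowerOp m ∘ₗ raiseOp n = weightOp m from
    LinearMap.congr_fun this x
  refine lhom_ext fun J c => ?_
  simp only [LinearMap.sub_apply, LinearMap.comp_apply, raiseOp, lowerOp, LinearMap.sum_apply,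
    map_sum]
  rw [Finset.sum_comm (f := fun i' i => lowerAt m i (raiseAt i' _)), ← Finset.sum_sub_distrib]
  simp_rw [← Finset.sum_sub_distrib]
  rw [Finset.sum_congr rfl fun i _ => Finset.sum_eq_single i
    (fun i' _ h => sub_eq_zero.mpr (raiseAt_lowerAt_comm m h.symm _)) (by simp)]
  simp only [raiseAt_lowerAt_sub_lowerAt_raiseAt_single, weightOp_single, ← single_finsetSum,
    ← Finset.mul_sum, degree]
  push_cast
  rw [Finset.sum_sub_distrib, Finset.mul_sum]

def homogeneousSubmodule (n : ℕ) (t : ℤ) : Submodule ℂ (W n) :=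
  supported ℂ ℂ {J | degree J = t}

lemma single_mem_homogeneousSubmodule (J : Fin n → ℕ) (c : ℂ) :
    single J c ∈ homogeneousSubmodule n (degree J) :=
  single_mem_supported ℂ c rfl

lemma homogeneousSubmodule_eq_bot {t : ℤ} (ht : t < 0) : homogeneousSubmodule n t = ⊥ := by
  have : {J : Fin n → ℕ | degree J = t} = ∅ := Set.eq_empty_of_forall_notMem fun J (hJ : _ = t) =>
    (Finset.sum_nonneg fun i _ => Int.natCast_nonneg (J i)).not_gt (hJ ▸ ht)
  rw [homogeneousSubmodule, this, supported_empty]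

lemma apply_mem_homogeneousSubmodule {X : Module.End ℂ (W n)} {a : ℤ}
    (hX : ∀ J, X (single J 1) ∈ homogeneousSubmodule n (degree J + a))
    {t : ℤ} {x : W n} (hx : x ∈ homogeneousSubmodule n t) :
    X x ∈ homogeneousSubmodule n (t + a) := by
  rw [homogeneousSubmodule, supported_eq_span_single] at hx
  induction hx using Submodule.span_induction with
  | mem y hy =>
    obtain ⟨J, rfl, rfl⟩ := hy
    exact hX J
  | zero => simp
  | add y z _ _ hy hz => simpa using add_mem hy hz
  | smul c y _ hy => simpa using Submodule.smul_mem _ c hy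

lemma weightOp_of_mem_homogeneousSubmodule (m : Fin n → ℕ) {t : ℤ} {x : W n}
    (hx : x ∈ homogeneousSubmodule n t) : weightOp m x = ((∑ i, m i : ℕ) - 2 * t : ℂ) • x := by
  rw [homogeneousSubmodule, supported_eq_span_single] at hx
  induction hx using Submodule.span_induction with
  | mem y hy =>
    obtain ⟨J, rfl, rfl⟩ := hy
    simp [smul_single, mul_comm]
  | zero => simp
  | add y z _ _ hy hz => simp [hy, hz]
  | smul c y _ hy => simp [hy, smul_comm c]

lemma lowerOp_single_mem (m : Fin n → ℕ) (J : Fin n → ℕ) :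
    lowerOp m (single J 1) ∈ homogeneousSubmodule n (degree J + 1) := by
  simp only [lowerOp, LinearMap.sum_apply, lowerAt_single]
  exact Submodule.sum_mem _ fun i _ => degree_incr J i ▸ single_mem_homogeneousSubmodule _ _

lemma raiseOp_single_mem (J : Fin n → ℕ) :
    raiseOp n (single J 1) ∈ homogeneousSubmodule n (degree J + -1) := by
  simp only [raiseOp, LinearMap.sum_apply, raiseAt_single]
  refine Submodule.sum_mem _ fun i _ => ?_
  split_ifs with h
  · exact Submodule.zero_mem _
  · exact (degree_decr h).trans (sub_eq_add_neg _ _) ▸ single_mem_homogeneousSubmodule _ _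

lemma weightOp_apply_sub_apply_weightOp {X : Module.End ℂ (W n)} {a : ℤ}
    (hX : ∀ J, X (single J 1) ∈ homogeneousSubmodule n (degree J + a)) (m : Fin n → ℕ)
    (x : W n) : weightOp m (X x) - X (weightOp m x) = (-2 * a : ℂ) • X x := by
  suffices weightOp m ∘ₗ X - X ∘ₗ weightOp m = (-2 * a : ℂ) • X from LinearMap.congr_fun this x
  refine lhom_ext fun J c => ?_
  have hJ := single_mem_homogeneousSubmodule J c
  simp only [LinearMap.sub_apply, LinearMap.comp_apply, LinearMap.smul_apply, map_smul,
    weightOp_of_mem_homogeneousSubmodule m (apply_mem_homogeneousSubmodule hX hJ),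
    weightOp_of_mem_homogeneousSubmodule m hJ, ← sub_smul]
  congr 1
  push_cast
  ring

attribute [local instance] LieRing.ofAssociativeRing

lemma isSl2Triple (m : Fin n → ℕ) (hm : ∑ i, m i ≠ 0) :
    IsSl2Triple (-weightOp m) (lowerOp m) (raiseOp n) where
  h_ne_zero h := by
    have := congr($h (single 0 1))
    simp [degree] at this
    exact hm (by exact_mod_cast this)
  lie_e_f := LinearMap.ext fun x => by
    show lowerOp m (raiseOp n x) - raiseOp n (lowerOp m x) = -weightOp m x
    rw [← raiseOp_lowerOp_sub_lowerOp_raiseOp, neg_sub]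
  lie_h_e_nsmul := LinearMap.ext fun x => by
    show -weightOp m (lowerOp m x) - lowerOp m (-weightOp m x) = 2 • lowerOp m x
    have := weightOp_apply_sub_apply_weightOp (lowerOp_single_mem m) m x
    rw [map_neg, sub_neg_eq_add, neg_add_eq_sub, ← neg_sub, this, two_nsmul]
    push_cast
    module
  lie_h_f_nsmul := LinearMap.ext fun x => by
    show -weightOp m (raiseOp n x) - raiseOp n (-weightOp m x) = -(2 • raiseOp n x)
    have := weightOp_apply_sub_apply_weightOp raiseOp_single_mem m x
    rw [map_neg, sub_neg_eq_add, neg_add_eq_sub, ← neg_sub, this, two_nsmul]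
    push_cast
    module

lemma raiseOp_pow_mem {t : ℤ} {x : W n} (hx : x ∈ homogeneousSubmodule n t) (r : ℕ) :
    (raiseOp n ^ r) x ∈ homogeneousSubmodule n (t - r) := by
  induction r with
  | zero => simpa using hx
  | succ r ih =>
    rw [pow_succ', Module.End.mul_apply, Nat.cast_succ, sub_add_eq_sub_sub, sub_eq_add_neg _ 1]
    exact apply_mem_homogeneousSubmodule raiseOp_single_mem ih

open LieModule in
lemma eq_zero_of_lowerOp_eq_zero (m : Fin n → ℕ) {d : ℕ} (hd : 2 * d < ∑ i, m i) {x : W n}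
    (hx : x ∈ homogeneousSubmodule n d) (hfx : lowerOp m x = 0) : x = 0 := by
  by_contra hx0
  have P : (isSl2Triple m (by omega)).HasPrimitiveVectorWith x (2 * d - (∑ i, m i : ℕ) : ℂ) :=
    { ne_zero := hx0
      lie_h := by
        show -weightOp m x = _
        rw [weightOp_of_mem_homogeneousSubmodule m hx]
        push_cast
        module
      lie_e := hfx }
  have hnil : (toEnd ℂ (Module.End ℂ (W n)) (W n) (raiseOp n) ^ (d + 1)) x = 0 := by
    rw [toEnd_module_end, LieHom.id_apply, ← Submodule.mem_bot ℂ,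
      ← homogeneousSubmodule_eq_bot (n := n) (t := d - (d + 1 : ℕ)) (by omega)]
    exact raiseOp_pow_mem hx _
  obtain ⟨N, hN⟩ := P.exists_nat_of_pow_toEnd_f_eq_zero hnil
  have : (2 * d - (∑ i, m i : ℕ) : ℤ) = N := by exact_mod_cast hN
  omega

instance (n j : ℕ) : Fintype (MIdx n j) :=
  Fintype.subtype (Finset.Nat.antidiagonalTuple n j) fun _ => Finset.Nat.mem_antidiagonalTuple

noncomputable def toW (j : ℕ) : V n j →ₗ[ℂ] W n := lmapDomain ℂ ℂ Subtype.val

lemma toW_injective (j : ℕ) : Function.Injective (toW (n := n) j) :=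
  mapDomain_injective Subtype.val_injective

lemma toW_mem_homogeneousSubmodule {j : ℕ} (y : V n j) : toW j y ∈ homogeneousSubmodule n j :=
  (mem_supported ℂ _).mpr fun J hJ => by
    obtain ⟨K, -, rfl⟩ := Finset.mem_image.mp (mapDomain_support hJ)
    simp [degree, ← K.2]

lemma toW_fMap (m : Fin n → ℕ) {j : ℕ} (y : V n j) :
    toW (j + 1) (fMap n m j y) = lowerOp m (toW j y) := by
  suffices toW (j + 1) ∘ₗ fMap n m j = lowerOp m ∘ₗ toW j from LinearMap.congr_fun this y
  refine lhom_ext fun J c => ?_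
  simp [toW, fMap, lowerOp, lift_apply, Finset.smul_sum, lowerCoeff, -single_mul]

lemma fMap_injective (m : Fin n → ℕ) {j : ℕ} (hj : 2 * j < ∑ i, m i) :
    Function.Injective (fMap n m j) := by
  refine (injective_iff_map_eq_zero _).mpr fun y hy => toW_injective j ?_
  rw [map_zero]
  exact eq_zero_of_lowerOp_eq_zero m hj (toW_mem_homogeneousSubmodule y)
    (by rw [← toW_fMap, hy, map_zero])

lemma fMap_single_apply (m : Fin n → ℕ) {j : ℕ} (J : MIdx n j) (c : ℂ) (K : MIdx n (j + 1)) :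
    fMap n m j (single J c) K = c * ∑ i, if incr J.1 i = K.1 then lowerCoeff m J.1 i else 0 := by
  rw [fMap, lift_apply, sum_single_index (by simp), Finsupp.smul_apply, finsetSum_apply,
    smul_eq_mul]
  congr 1
  refine Finset.sum_congr rfl fun i _ => ?_
  simp only [Finsupp.smul_apply, single_apply, Subtype.ext_iff, smul_eq_mul, mul_ite, mul_one,
    mul_zero, lowerCoeff]

lemma fMap_apply (m : Fin n → ℕ) {j : ℕ} (y : V n j) (K : MIdx n (j + 1)) :
    fMap n m j y K =
      y.sum fun J c => c * ∑ i, if incr J.1 i = K.1 then lowerCoeff m J.1 i else 0 := by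
  conv_lhs => rw [← y.sum_single, map_finsuppSum, Finsupp.sum_apply]
  simp only [fMap_single_apply]

lemma fMap_apply_incr_of_forall_le (m : Fin n → ℕ) {j : ℕ} {y : V n j} {J : MIdx n j}
    {i : Fin n} (hJ : ∀ J' ∈ y.support, J'.1 i ≤ J.1 i) :
    fMap n m j y ⟨incr J.1 i, by rw [sum_incr, J.2]⟩ = y J * lowerCoeff m J.1 i := by
  rw [fMap_apply, Finsupp.sum, Finset.sum_eq_single J]
  · rw [Finset.sum_eq_single i (fun i' _ hi' => if_neg fun h => (lt_of_incr_eq_incr h hi').false)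
      (by simp), if_pos rfl]
  · refine fun J' hJ' hne => mul_eq_zero_of_right _ (Finset.sum_eq_zero fun i' _ => if_neg ?_)
    intro h
    rcases eq_or_ne i' i with rfl | hi'
    · exact hne (Subtype.ext (incr_injective i' h))
    · exact (hJ J' hJ').not_gt (lt_of_incr_eq_incr h hi')
  · simp +contextual

lemma le_of_mem_support_of_fMap_eq_zero (m : Fin n → ℕ) {j : ℕ} {y : V n j}
    (hy : fMap n m j y = 0) {J : MIdx n j} (hJ : J ∈ y.support) (i : Fin n) : J.1 i ≤ m i := by
  obtain ⟨J₀, hJ₀, hmax⟩ := y.support.exists_max_image (fun J => J.1 i) ⟨J, hJ⟩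
  have h := fMap_apply_incr_of_forall_le m hmax
  rw [hy, Finsupp.zero_apply, eq_comm, mul_eq_zero, or_iff_right (mem_support_iff.mp hJ₀),
    lowerCoeff, mul_eq_zero, or_iff_right (Nat.cast_add_one_ne_zero _), sub_eq_zero,
    Nat.cast_inj] at h
  exact (hmax J hJ).trans h.ge

abbrev BoxMIdx (m : Fin n → ℕ) (j : ℕ) : Type := {J : MIdx n j // ∀ i, J.1 i ≤ m i}

noncomputable def boxIncl (m : Fin n → ℕ) (j : ℕ) : (BoxMIdx m j →₀ ℂ) →ₗ[ℂ] V n j :=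
  lmapDomain ℂ ℂ Subtype.val

lemma boxIncl_injective (m : Fin n → ℕ) (j : ℕ) : Function.Injective (boxIncl m j) :=
  mapDomain_injective Subtype.val_injective

/-- `f` on the weight spaces of `L_{m₁} ⊗ ⋯ ⊗ L_{mₙ}`, whose bases are indexed by the boxes. -/
noncomputable def fMapBox (m : Fin n → ℕ) (j : ℕ) :
    (BoxMIdx m j →₀ ℂ) →ₗ[ℂ] (BoxMIdx m (j + 1) →₀ ℂ) :=
  lcomapDomain Subtype.val Subtype.val_injective ∘ₗ fMap n m j ∘ₗ boxIncl m j

lemma fMap_boxIncl_mem_supported (m : Fin n → ℕ) {j : ℕ} (x : BoxMIdx m j →₀ ℂ) :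
    fMap n m j (boxIncl m j x) ∈
      supported ℂ ℂ (Set.range (Subtype.val : BoxMIdx m (j + 1) → MIdx n (j + 1))) := by
  induction x using induction_linear with
  | zero => simp
  | add x y hx hy => simpa using add_mem hx hy
  | single J c =>
    rw [boxIncl, lmapDomain_apply, mapDomain_single, fMap, lift_apply, sum_single_index (by simp)]
    refine Submodule.smul_mem _ c (Submodule.sum_mem _ fun i _ => ?_)
    rcases (J.2 i).lt_or_eq with hi | hi
    · refine Submodule.smul_mem _ _ (single_mem_supported ℂ 1 ⟨⟨_, fun a => ?_⟩, rfl⟩)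
      rcases eq_or_ne a i with rfl | ha
      · simpa [incr_apply] using hi
      · simpa [incr_apply, ha] using J.2 a
    · simp [hi]

lemma boxIncl_fMapBox (m : Fin n → ℕ) {j : ℕ} (x : BoxMIdx m j →₀ ℂ) :
    boxIncl m (j + 1) (fMapBox m j x) = fMap n m j (boxIncl m j x) :=
  mapDomain_comapDomain _ Subtype.val_injective _
    ((mem_supported _ _).mp (fMap_boxIncl_mem_supported m x))

lemma ker_fMap_eq_map_ker_fMapBox (m : Fin n → ℕ) (j : ℕ) :
    LinearMap.ker (fMap n m j) = (LinearMap.ker (fMapBox m j)).map (boxIncl m j) := by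
  ext y
  constructor
  · intro hy
    have hsupp : ↑y.support ⊆ Set.range (Subtype.val : BoxMIdx m j → MIdx n j) := fun J hJ =>
      ⟨⟨J, le_of_mem_support_of_fMap_eq_zero m hy (Finset.mem_coe.mp hJ)⟩, rfl⟩
    have hxy : boxIncl m j (comapDomain _ y Subtype.val_injective.injOn) = y :=
      mapDomain_comapDomain _ Subtype.val_injective y hsupp
    refine ⟨_, ?_, hxy⟩
    rw [SetLike.mem_coe, LinearMap.mem_ker, ← (boxIncl_injective m (j + 1)).eq_iff,
      boxIncl_fMapBox, map_zero, hxy]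
    exact hy
  · rintro ⟨x, hx, rfl⟩
    rw [LinearMap.mem_ker, ← boxIncl_fMapBox, LinearMap.mem_ker.mp hx, map_zero]

lemma finrank_ker_fMap (m : Fin n → ℕ) (j : ℕ) :
    Module.finrank ℂ (LinearMap.ker (fMap n m j)) =
      Module.finrank ℂ (LinearMap.ker (fMapBox m j)) := by
  rw [ker_fMap_eq_map_ker_fMapBox]
  exact (Submodule.equivMapOfInjective _ (boxIncl_injective m j) _).finrank_eq.symm

lemma sum_sub_of_le {m J : Fin n → ℕ} (hJ : ∀ i, J i ≤ m i) :
    ∑ i, (m - J) i = ∑ i, m i - ∑ i, J i :=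
  Finset.sum_tsub_distrib _ fun i _ => hJ i

def boxFlip (m : Fin n → ℕ) {j j' : ℕ} (h : j + j' = ∑ i, m i) : BoxMIdx m j ≃ BoxMIdx m j' where
  toFun J := ⟨⟨m - J.1.1, by rw [sum_sub_of_le J.2, J.1.2]; omega⟩, fun i => Nat.sub_le _ _⟩
  invFun J := ⟨⟨m - J.1.1, by rw [sum_sub_of_le J.2, J.1.2]; omega⟩, fun i => Nat.sub_le _ _⟩
  left_inv J := Subtype.ext <| Subtype.ext <| funext fun i => Nat.sub_sub_self (J.2 i)
  right_inv J := Subtype.ext <| Subtype.ext <| funext fun i => Nat.sub_sub_self (J.2 i)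

lemma incr_sub_eq_sub_iff {m J K : Fin n → ℕ} (hJ : ∀ a, J a ≤ m a) (hK : ∀ a, K a ≤ m a)
    (i : Fin n) : incr (m - K) i = m - J ↔ incr J i = K := by
  simp only [funext_iff, incr_apply, Pi.sub_apply]
  refine forall_congr' fun a => ?_
  have := hJ a
  have := hK a
  split_ifs <;> omega

lemma lowerCoeff_sub_of_incr_eq {m J K : Fin n → ℕ} {i : Fin n} (h : incr J i = K)
    (hK : K i ≤ m i) : lowerCoeff m (m - K) i = lowerCoeff m J i := by
  have hKi : K i = J i + 1 := by simp [← h, incr_apply]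
  rw [hKi] at hK
  simp only [lowerCoeff, Pi.sub_apply, hKi, Nat.cast_sub hK]
  push_cast
  ring

noncomputable abbrev fMapBoxMatrix (m : Fin n → ℕ) (j : ℕ) :
    Matrix (BoxMIdx m (j + 1)) (BoxMIdx m j) ℂ :=
  LinearMap.toMatrix Finsupp.basisSingleOne Finsupp.basisSingleOne (fMapBox m j)

lemma finrank_range_fMapBox (m : Fin n → ℕ) (j : ℕ) :
    Module.finrank ℂ (LinearMap.range (fMapBox m j)) = (fMapBoxMatrix m j).rank :=
  LinearMap.finrank_range_eq_rank_toMatrix _ _ _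

lemma fMapBoxMatrix_apply (m : Fin n → ℕ) {j : ℕ} (K : BoxMIdx m (j + 1)) (J : BoxMIdx m j) :
    fMapBoxMatrix m j K J = ∑ i, if incr J.1.1 i = K.1.1 then lowerCoeff m J.1.1 i else 0 := by
  simp [LinearMap.toMatrix_apply, fMapBox, boxIncl, fMap_single_apply]

lemma fMapBoxMatrix_eq_transpose (m : Fin n → ℕ) {j j' : ℕ} (h : j + j' + 1 = ∑ i, m i) :
    fMapBoxMatrix m j' =
      (fMapBoxMatrix m j).transpose.submatrix (boxFlip m (by omega)) (boxFlip m (by omega)) := by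
  ext K J
  simp only [Matrix.submatrix_apply, Matrix.transpose_apply, fMapBoxMatrix_apply]
  refine Finset.sum_congr rfl fun i _ => ?_
  simp only [boxFlip, Equiv.coe_fn_mk, incr_sub_eq_sub_iff J.2 K.2]
  split_ifs with hJK
  · exact (lowerCoeff_sub_of_incr_eq hJK (K.2 i)).symm
  · rfl

lemma finrank_range_fMapBox_flip (m : Fin n → ℕ) {j j' : ℕ} (h : j + j' + 1 = ∑ i, m i) :
    Module.finrank ℂ (LinearMap.range (fMapBox m j')) =
      Module.finrank ℂ (LinearMap.range (fMapBox m j)) := by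
  rw [finrank_range_fMapBox, finrank_range_fMapBox, fMapBoxMatrix_eq_transpose m h,
    Matrix.rank_submatrix, Matrix.rank_transpose]

lemma fMapBox_injective (m : Fin n → ℕ) {j : ℕ} (hj : 2 * j < ∑ i, m i) :
    Function.Injective (fMapBox m j) := fun x y hxy =>
  boxIncl_injective m j <| fMap_injective m hj <| by rw [← boxIncl_fMapBox, ← boxIncl_fMapBox, hxy]

lemma fMapBox_surjective (m : Fin n → ℕ) {j : ℕ} (hj : ∑ i, m i ≤ 2 * j) :
    Function.Surjective (fMapBox m j) := by
  rcases lt_or_ge j (∑ i, m i) with hjm | hjm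
  · have hflip : j + (∑ i, m i - j - 1) + 1 = ∑ i, m i := by omega
    rw [← LinearMap.range_eq_top]
    apply Submodule.eq_top_of_finrank_eq
    rw [← finrank_range_fMapBox_flip m hflip,
      LinearMap.finrank_range_of_inj (fMapBox_injective m (by omega)),
      Module.finrank_finsupp_self, Module.finrank_finsupp_self,
      Fintype.card_congr (boxFlip m (by omega : (j + 1) + (∑ i, m i - j - 1) = ∑ i, m i))]
  · have : IsEmpty (BoxMIdx m (j + 1)) := ⟨fun J => by
      have := Finset.sum_le_sum fun i (_ : i ∈ Finset.univ) => J.2 i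
      rw [J.1.2] at this
      omega⟩
    exact Function.surjective_to_subsingleton _

lemma card_boxMIdx (m : Fin n → ℕ) (j : ℕ) : Fintype.card (BoxMIdx m j) = dCount n m j := by
  rw [dCount, ← Nat.card_coe_set_eq, ← Nat.card_eq_fintype_card]
  exact Nat.card_congr
    { toFun J := ⟨J.1.1, J.2, by exact_mod_cast J.1.2⟩
      invFun J := ⟨⟨J.1, by exact_mod_cast J.2.2⟩, J.2.1⟩
      left_inv _ := rfl
      right_inv _ := rfl }

lemma dCount_sum_sub (m : Fin n → ℕ) (j : ℤ) : dCount n m (∑ i, (m i : ℤ) - j) = dCount n m j := by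
  refine Set.ncard_congr (fun J _ => m - J) ?_ ?_ ?_
  · rintro J ⟨hJ, hsum⟩
    refine ⟨fun i => Nat.sub_le _ _, ?_⟩
    simp only [Pi.sub_apply]
    rw [Finset.sum_congr rfl fun i _ => Nat.cast_sub (hJ i), Finset.sum_sub_distrib, hsum]
    ring
  · rintro J J' ⟨hJ, -⟩ ⟨hJ', -⟩ h
    funext i
    rw [← Nat.sub_sub_self (hJ i), ← Nat.sub_sub_self (hJ' i)]
    exact congrArg (m i - ·) (congr_fun h i)
  · rintro J ⟨hJ, hsum⟩
    refine ⟨m - J, ⟨fun i => Nat.sub_le _ _, ?_⟩, funext fun i => Nat.sub_sub_self (hJ i)⟩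
    simp only [Pi.sub_apply]
    rw [Finset.sum_congr rfl fun i _ => Nat.cast_sub (hJ i), Finset.sum_sub_distrib, hsum]

lemma finrank_ker_fMapBox (m : Fin n → ℕ) {j : ℕ} (hj : ∑ i, m i ≤ 2 * j) :
    (Module.finrank ℂ (LinearMap.ker (fMapBox m j)) : ℤ) = dCount n m j - dCount n m (j + 1) := by
  have := LinearMap.finrank_range_add_finrank_ker (fMapBox m j)
  rw [LinearMap.range_eq_top.mpr (fMapBox_surjective m hj), finrank_top,
    Module.finrank_finsupp_self, Module.finrank_finsupp_self, card_boxMIdx, card_boxMIdx] at this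
  push_cast at this ⊢
  omega

end VermaDual

theorem kernel_dim_resonant_general (n k : ℕ) (m : Fin n → ℕ)
    (h1 : (∑ i, (m i : ℤ)) - k + 1 < k) :
    (Module.finrank ℂ (LinearMap.ker (fMap n m (k - 1))) : ℤ)
      = w n m ((∑ i, (m i : ℤ)) - k + 1) := by
  have hm : ((∑ i, m i : ℕ) : ℤ) = ∑ i, (m i : ℤ) := Nat.cast_sum _ _
  rw [VermaDual.finrank_ker_fMap, VermaDual.finrank_ker_fMapBox m (by omega), w,
    ← VermaDual.dCount_sum_sub m (k - 1 : ℕ), ← VermaDual.dCount_sum_sub m ((k - 1 : ℕ) + 1)]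
  congr 3 <;> omega

/-- If `0 ≤ |m| − k + 1 < k`, then `dim ker (f_{k,m} : V_{k−1} → V_k) = w(m, |m| − k + 1)`. -/
theorem kernel_dim_resonant (n k : ℕ) (hn : 1 ≤ n) (hk : 1 ≤ k) (m : Fin n → ℕ)
    (h0 : 0 ≤ (∑ i, (m i : ℤ)) - k + 1) (h1 : (∑ i, (m i : ℤ)) - k + 1 < k) :
    (Module.finrank ℂ (LinearMap.ker (fMap n m (k - 1))) : ℤ)
      = w n m ((∑ i, (m i : ℤ)) - k + 1) :=
  kernel_dim_resonant_general n k m h1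
end

section
/- Suppose it is not the case that 0 ≤ |m| − k + 1 < k (i.e., either |m| < k − 1 or |m| ≥ 2k − 1). Then the linear map f_{k,m} : V_{k−1} → V_k is injective and the dimension of its cokernel equals C(n+k−2, k). -/
open Finsupp

/-!
Together with the degree-lowering map `eMap`, the map `fMap` satisfies the `sl₂` relation
`e f - f e = |m| - 2j` on `V_j`. By induction on `j` this shows that `e ∘ f` is annihilated on
`V_j` by `∏_{s ≤ j} (X - (j - s + 1)(|m| - s - j))`. Outside the resonant range `j ≤ |m| ≤ 2j`
no root of this polynomial is `0`, so `e ∘ f`, and hence `f = f_{j+1,m}`, is injective; the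
cokernel then has dimension `C(n+j, j+1) - C(n+j-1, j) = C(n+j-1, j+1)`.
-/

open Polynomial

theorem aeval_comp_eq_comp_aeval {R M N : Type*} [CommSemiring R] [AddCommMonoid M] [Module R M]
    [AddCommMonoid N] [Module R N] {A : Module.End R M} {B : Module.End R N} {F : M →ₗ[R] N}
    (h : B ∘ₗ F = F ∘ₗ A) (p : R[X]) : aeval B p ∘ₗ F = F ∘ₗ aeval A p := by
  induction p using Polynomial.induction_on' with
  | add p q hp hq => simp only [map_add, LinearMap.add_comp, LinearMap.comp_add, hp, hq]
  | monomial k a =>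
    simp only [aeval_monomial, Module.algebraMap_end_eq_smul_id, smul_mul_assoc,
      Module.End.mul_eq_comp, LinearMap.id_comp, LinearMap.smul_comp, LinearMap.comp_smul,
      Module.End.commute_pow_left_of_commute h]

theorem injective_of_aeval_eq_zero {K M : Type*} [Field K] [AddCommGroup M] [Module K M]
    {T : Module.End K M} {p : K[X]} (hp : aeval T p = 0) (h0 : p.eval 0 ≠ 0) :
    Function.Injective T := by
  refine (injective_iff_map_eq_zero T).2 fun x hx => ?_
  have hx' : aeval T p x = p.eval 0 • x := by
    conv_lhs => rw [← divX_mul_X_add p]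
    simp [hx, coeff_zero_eq_eval_zero]
  rw [hp] at hx'
  exact (smul_eq_zero.1 hx'.symm).resolve_left h0

def decr {n : ℕ} (J : Fin n → ℕ) (i : Fin n) : Fin n → ℕ :=
  Function.update J i (J i - 1)

theorem sum_decr {n : ℕ} (J : Fin n → ℕ) {i : Fin n} (h : 0 < J i) :
    ∑ x, decr J i x + 1 = ∑ x, J x := by
  rw [decr, Finset.sum_update_of_mem (Finset.mem_univ i),
    Finset.sum_eq_sum_sdiff_singleton_add (Finset.mem_univ i) J]
  omega

namespace MIdx

variable {n j : ℕ}

def raise (J : MIdx n j) (i : Fin n) : MIdx n (j + 1) :=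
  ⟨incr J.1 i, by rw [sum_incr, J.2]⟩

def lower (J : MIdx n (j + 1)) (i : Fin n) (h : 0 < J.1 i) : MIdx n j :=
  ⟨decr J.1 i, by have := sum_decr J.1 h; have := J.2; omega⟩

@[simp]
theorem raise_apply (J : MIdx n j) (i x : Fin n) :
    (J.raise i).1 x = if x = i then J.1 x + 1 else J.1 x := by
  simp only [raise, incr, Function.update_apply]; split_ifs with hx <;> simp only [hx]

@[simp]
theorem lower_apply (J : MIdx n (j + 1)) (i : Fin n) (h : 0 < J.1 i) (x : Fin n) :
    (J.lower i h).1 x = if x = i then J.1 x - 1 else J.1 x := by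
  simp only [lower, decr, Function.update_apply]; split_ifs with hx <;> simp only [hx]

theorem lower_raise (J : MIdx n j) (i : Fin n) (h : 0 < (J.raise i).1 i) :
    (J.raise i).lower i h = J := by
  ext x; simp only [lower_apply, raise_apply]; split_ifs <;> omega

theorem raise_lower (J : MIdx n (j + 1)) (i : Fin n) (h : 0 < J.1 i) :
    (J.lower i h).raise i = J := by
  ext x; simp only [lower_apply, raise_apply]; split_ifs with hx <;> subst_vars <;> omega

theorem lower_raise_comm (J : MIdx n (j + 1)) {i i' : Fin n} (hne : i' ≠ i)
    (h : 0 < (J.raise i).1 i') :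
    (J.raise i).lower i' h = (J.lower i' (by simpa [hne] using h)).raise i := by
  ext x; simp only [lower_apply, raise_apply]; split_ifs <;> simp_all

noncomputable def lowerSingle (J : MIdx n (j + 1)) (i : Fin n) : V n j :=
  if h : 0 < J.1 i then Finsupp.single (J.lower i h) 1 else 0

theorem lowerSingle_raise_self (J : MIdx n j) (i : Fin n) :
    (J.raise i).lowerSingle i = Finsupp.single J 1 := by
  rw [lowerSingle, dif_pos (by simp), lower_raise]

theorem lowerSingle_raise_of_ne (J : MIdx n (j + 1)) {i i' : Fin n} (hne : i' ≠ i) :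
    (J.raise i).lowerSingle i' =
      if h : 0 < J.1 i' then Finsupp.single ((J.lower i' h).raise i) 1 else 0 := by
  have hval : (J.raise i).1 i' = J.1 i' := by simp [hne]
  by_cases h : 0 < J.1 i'
  · rw [lowerSingle, dif_pos (hval ▸ h), dif_pos h, lower_raise_comm J hne]
  · rw [lowerSingle, dif_neg (hval ▸ h), dif_neg h]

theorem lowerSingle_raise_eq_zero (J : MIdx n j) {i i' : Fin n} (hne : i' ≠ i)
    (h : J.1 i' = 0) : (J.raise i).lowerSingle i' = 0 := by
  simp [lowerSingle, hne, h]

end MIdx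

-- Plays the role of `e ∈ sl₂`: `e f - f e = |m| - 2j` on `V_j` (`eMap_comp_fMap_succ`).
noncomputable def eMap (n j : ℕ) : V n (j + 1) →ₗ[ℂ] V n j :=
  Finsupp.lift (V n j) ℂ (MIdx n (j + 1)) fun J => ∑ i, J.lowerSingle i

section Commutator

variable {n : ℕ} (m : Fin n → ℕ)

def hEigenvalue (j : ℕ) : ℂ := ∑ i, (m i : ℂ) - 2 * j

def fCoeff (J : Fin n → ℕ) (i : Fin n) : ℂ := ((J i : ℂ) + 1) * ((m i : ℂ) - (J i : ℂ))

theorem fMap_single {j : ℕ} (J : MIdx n j) :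
    fMap n m j (Finsupp.single J 1) = ∑ i, fCoeff m J.1 i • Finsupp.single (J.raise i) 1 := by
  rw [fMap, Finsupp.lift_apply, Finsupp.sum_single_index (by simp), one_smul]
  rfl

theorem eMap_single {j : ℕ} (J : MIdx n (j + 1)) :
    eMap n j (Finsupp.single J 1) = ∑ i, J.lowerSingle i := by
  rw [eMap, Finsupp.lift_apply, Finsupp.sum_single_index (by simp), one_smul]

-- The terms of `e f e_J` and of `f e e_J` agree off the diagonal `i = i'`.
theorem fCoeff_smul_lowerSingle_raise {j : ℕ} (J : MIdx n (j + 1)) (i i' : Fin n) :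
    fCoeff m J.1 i • (J.raise i).lowerSingle i' =
      (if h : 0 < J.1 i' then
        fCoeff m (J.lower i' h).1 i • Finsupp.single ((J.lower i' h).raise i) 1 else 0) +
      if i = i' then ((m i : ℂ) - 2 * J.1 i) • Finsupp.single J 1 else 0 := by
  by_cases hii : i = i'
  · subst hii
    rw [MIdx.lowerSingle_raise_self, if_pos rfl]
    by_cases h : 0 < J.1 i
    · rw [dif_pos h, MIdx.raise_lower, ← add_smul, fCoeff, fCoeff, MIdx.lower_apply, if_pos rfl,
        Nat.cast_pred h]
      ring_nf
    · rw [dif_neg h, zero_add, fCoeff, Nat.eq_zero_of_not_pos h]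
      ring_nf
  · rw [if_neg hii, add_zero, MIdx.lowerSingle_raise_of_ne J (Ne.symm hii)]
    split_ifs with h
    · rw [fCoeff, fCoeff, MIdx.lower_apply, if_neg hii]
    · rw [smul_zero]

theorem fMap_lowerSingle {j : ℕ} (J : MIdx n (j + 1)) (i' : Fin n) :
    fMap n m j (J.lowerSingle i') = ∑ i, fCoeff m J.1 i • (J.raise i).lowerSingle i' -
      ((m i' : ℂ) - 2 * J.1 i') • Finsupp.single J 1 := by
  simp only [fCoeff_smul_lowerSingle_raise, Finset.sum_add_distrib, Finset.sum_ite_eq',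
    Finset.mem_univ, if_true, add_sub_cancel_right]
  rw [MIdx.lowerSingle]
  split_ifs with h
  · exact fMap_single m _
  · simp

theorem eMap_fMap_single {j : ℕ} (J : MIdx n (j + 1)) :
    eMap n (j + 1) (fMap n m (j + 1) (Finsupp.single J 1)) =
      fMap n m j (eMap n j (Finsupp.single J 1)) +
        hEigenvalue m (j + 1) • Finsupp.single J 1 := by
  have hJ : ∑ i, ((m i : ℂ) - 2 * J.1 i) = hEigenvalue m (j + 1) := by
    rw [Finset.sum_sub_distrib, ← Finset.mul_sum, hEigenvalue]
    congr 2
    exact_mod_cast J.2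
  rw [fMap_single, eMap_single, map_sum, map_sum]
  simp only [map_smul, eMap_single, Finset.smul_sum, fMap_lowerSingle]
  rw [Finset.sum_sub_distrib, ← Finset.sum_smul, hJ, Finset.sum_comm]
  abel

theorem eMap_fMap_single_zero (J : MIdx n 0) :
    eMap n 0 (fMap n m 0 (Finsupp.single J 1)) = hEigenvalue m 0 • Finsupp.single J 1 := by
  have hJ : ∀ i, J.1 i = 0 := fun i => (Finset.sum_eq_zero_iff.1 J.2) i (Finset.mem_univ i)
  have hE : ∀ i, eMap n 0 (Finsupp.single (J.raise i) 1) = Finsupp.single J 1 := fun i => by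
    rw [eMap_single, Finset.sum_eq_single i (fun i' _ hne => J.lowerSingle_raise_eq_zero hne (hJ i'))
      (by simp), MIdx.lowerSingle_raise_self]
  simp only [fMap_single, map_sum, map_smul, hE, ← Finset.sum_smul, fCoeff, hJ, hEigenvalue]
  simp

theorem eMap_comp_fMap_zero : eMap n 0 ∘ₗ fMap n m 0 = hEigenvalue m 0 • LinearMap.id := by
  ext J : 2
  simpa using eMap_fMap_single_zero m J

theorem eMap_comp_fMap_succ (j : ℕ) :
    eMap n (j + 1) ∘ₗ fMap n m (j + 1) =
      fMap n m j ∘ₗ eMap n j + hEigenvalue m (j + 1) • LinearMap.id := by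
  ext J : 2
  simpa using eMap_fMap_single m J

end Commutator

section Vanishing

variable {n : ℕ} (m : Fin n → ℕ)

-- A vector `v ∈ V_s` with `e v = 0` has weight `|m| - 2s`, and `e f` acts on `f^(j-s) v ∈ V_j`
-- by `(j - s + 1)(|m| - s - j)`.
def efEigenvalue (s j : ℕ) : ℂ := ((j : ℂ) - s + 1) * ((∑ i, (m i : ℂ)) - s - j)

noncomputable def vanishingPoly (j : ℕ) : ℂ[X] :=
  ∏ s ∈ Finset.range (j + 1), (X - C (efEigenvalue m s j))

theorem vanishingPoly_succ_comp (j : ℕ) :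
    (vanishingPoly m (j + 1)).comp (X + C (hEigenvalue m (j + 1))) = vanishingPoly m j * X := by
  have hfactor : ∀ s, (X - C (efEigenvalue m s (j + 1))).comp (X + C (hEigenvalue m (j + 1))) =
      X - C (efEigenvalue m s j) := fun s => by
    rw [sub_comp, X_comp, C_comp, add_sub_assoc, ← C_sub, sub_eq_add_neg X, ← C_neg]
    congr 2
    simp only [efEigenvalue, hEigenvalue]; push_cast; ring
  have htop : efEigenvalue m (j + 1) j = 0 := by
    simp only [efEigenvalue]; push_cast; ring
  rw [vanishingPoly, prod_comp, Finset.prod_range_succ]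
  simp only [hfactor, htop, C_0, sub_zero]
  rfl

theorem aeval_vanishingPoly (j : ℕ) :
    aeval (eMap n j ∘ₗ fMap n m j) (vanishingPoly m j) = 0 := by
  induction j with
  | zero =>
    have hc : efEigenvalue m 0 0 = hEigenvalue m 0 := by simp [efEigenvalue, hEigenvalue]
    rw [vanishingPoly, Finset.prod_range_one, map_sub, aeval_X, aeval_C, eMap_comp_fMap_zero,
      Module.algebraMap_end_eq_smul_id, hc, sub_self]
  | succ j ih =>
    have hshift : eMap n (j + 1) ∘ₗ fMap n m (j + 1) =
        aeval (fMap n m j ∘ₗ eMap n j) (X + C (hEigenvalue m (j + 1))) := by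
      rw [eMap_comp_fMap_succ, map_add, aeval_X, aeval_C, Module.algebraMap_end_eq_smul_id]
    rw [hshift, ← aeval_comp, vanishingPoly_succ_comp, aeval_mul, aeval_X, Module.End.mul_eq_comp,
      ← LinearMap.comp_assoc,
      aeval_comp_eq_comp_aeval (LinearMap.comp_assoc (fMap n m j) (eMap n j) (fMap n m j)), ih,
      LinearMap.comp_zero, LinearMap.zero_comp]

theorem eval_zero_vanishingPoly_ne_zero {j : ℕ} (hm : ∑ i, m i < j ∨ 2 * j < ∑ i, m i) :
    (vanishingPoly m j).eval 0 ≠ 0 := by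
  simp only [vanishingPoly, eval_prod, eval_sub, eval_X, eval_C, zero_sub, neg_ne_zero,
    Finset.prod_ne_zero_iff, Finset.mem_range, efEigenvalue]
  intro s hs
  refine mul_ne_zero ?_ ?_
  · rw [← Nat.cast_sub (by omega : s ≤ j)]
    exact Nat.cast_add_one_ne_zero _
  · rw [sub_sub, sub_ne_zero, ← Nat.cast_sum, ← Nat.cast_add, Ne, Nat.cast_inj]
    omega

end Vanishing

noncomputable instance (n j : ℕ) : Fintype (MIdx n j) :=
  Fintype.ofEquiv _ (Sym.equivNatSumOfFintype (Fin n) j)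

theorem finrank_V (n j : ℕ) : Module.finrank ℂ (V n j) = (n + j - 1).choose j := by
  rw [Module.finrank_finsupp_self, ← Fintype.card_congr (Sym.equivNatSumOfFintype (Fin n) j),
    Sym.card_sym_eq_choose, Fintype.card_fin]

/-- If it is not the case that `0 ≤ |m| − k + 1 < k`, then `f_{k,m} : V_{k−1} → V_k`
is injective and `dim coker f_{k,m} = C(n+k−2, k)`. -/
theorem nonresonant_injective_coker (n k : ℕ) (hn : 1 ≤ n) (hk : 1 ≤ k) (m : Fin n → ℕ)
    (h : ¬ (0 ≤ (∑ i, (m i : ℤ)) - k + 1 ∧ (∑ i, (m i : ℤ)) - k + 1 < k)) :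
    Function.Injective (fMap n m (k - 1)) ∧
    Module.finrank ℂ (V n (k - 1 + 1) ⧸ LinearMap.range (fMap n m (k - 1)))
      = Nat.choose (n + k - 2) k := by
  obtain ⟨j, rfl⟩ : ∃ j, k = j + 1 := ⟨k - 1, by omega⟩
  rw [Nat.add_sub_cancel]
  rw [← Nat.cast_sum] at h
  have hm : ∑ i, m i < j ∨ 2 * j < ∑ i, m i := by omega
  have hef := injective_of_aeval_eq_zero (aeval_vanishingPoly m j)
    (eval_zero_vanishingPoly_ne_zero m hm)
  rw [LinearMap.coe_comp] at hef
  have hinj : Function.Injective (fMap n m j) := hef.of_comp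
  refine ⟨hinj, ?_⟩
  have hdim := Submodule.finrank_quotient_add_finrank (LinearMap.range (fMap n m j))
  rw [LinearMap.finrank_range_of_inj hinj, finrank_V, finrank_V] at hdim
  have hpascal := Nat.choose_succ_succ' (n + j - 1) j
  rw [show n + j - 1 + 1 = n + (j + 1) - 1 by omega] at hpascal
  rw [show n + (j + 1) - 2 = n + j - 1 by omega]
  omega
end

section
/- Suppose n ≥ 3 and 0 ≤ m_1 ≤ m_2 ≤ ⋯ ≤ m_n. Let r be the largest integer with |m| − 2r ≥ 0 and r^1 the largest integer with |m^1| − 2r^1 ≥ 0, where m^1 = (m_2,…,m_n) and |m^1| = m_2 + ⋯ + m_n. For every integer j with r^1 < j ≤ r, one has w(m,j) = w(m^1, j−m_1) + w(m^1, j−m_1+1) + ⋯ + w(m^1, |m^1| − j). -/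
open Finsupp

/-!
Splitting off the first coordinate gives `d(m, j) = ∑_{k=0}^{m₁} d(m¹, j - k)`, so `w(m, j)`
telescopes to `d(m¹, j) - d(m¹, j - m₁ - 1)`. The reflection `J ↦ m¹ - J` of the box gives
`d(m¹, j) = d(m¹, |m¹| - j)`, and the right-hand side telescopes to
`d(m¹, |m¹| - j) - d(m¹, j - m₁ - 1)` as soon as `j - m₁ - 1 ≤ |m¹| - j`, which `2j ≤ |m|` ensures.
-/

open Finset

theorem Int.sum_Icc_sub_sub_one {M : Type*} [AddCommGroup M] (f : ℤ → M) {a b : ℤ}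
    (hab : a - 1 ≤ b) : ∑ i ∈ Icc a b, (f i - f (i - 1)) = f b - f (a - 1) := by
  induction b, hab using Int.leInduction with
  | base => simp
  | succ b hb ih =>
    rw [← insert_Icc_right_eq_Icc_add_one (by omega), sum_insert (by simp), ih,
      add_sub_cancel_right]
    abel

def boxLayer (n : ℕ) (m : Fin n → ℕ) (j : ℤ) : Finset (Fin n → ℕ) :=
  {J ∈ Fintype.piFinset fun i => range (m i + 1) | ∑ i, (J i : ℤ) = j}

theorem mem_boxLayer {n : ℕ} {m : Fin n → ℕ} {j : ℤ} {J : Fin n → ℕ} :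
    J ∈ boxLayer n m j ↔ (∀ i, J i ≤ m i) ∧ ∑ i, (J i : ℤ) = j := by
  simp [boxLayer]

theorem dCount_eq_card_boxLayer (n : ℕ) (m : Fin n → ℕ) (j : ℤ) :
    dCount n m j = #(boxLayer n m j) := by
  rw [dCount, ← Set.ncard_coe_finset]
  congr 1
  ext J
  simp [mem_boxLayer]

theorem reflect_mem_boxLayer {n : ℕ} {m : Fin n → ℕ} {j : ℤ} {J : Fin n → ℕ}
    (hJ : J ∈ boxLayer n m j) :
    (fun i => m i - J i) ∈ boxLayer n m ((∑ i, (m i : ℤ)) - j) := by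
  rw [mem_boxLayer] at hJ ⊢
  refine ⟨fun i => Nat.sub_le _ _, ?_⟩
  simp_rw [Nat.cast_sub (hJ.1 _), sum_sub_distrib, hJ.2]

theorem dCount_reflect (n : ℕ) (m : Fin n → ℕ) (j : ℤ) :
    dCount n m ((∑ i, (m i : ℤ)) - j) = dCount n m j := by
  simp only [dCount_eq_card_boxLayer]
  have reflect_reflect {J : Fin n → ℕ} (hJ : ∀ i, J i ≤ m i) :
      (fun i => m i - (m i - J i)) = J :=
    funext fun i => Nat.sub_sub_self (hJ i)
  refine card_nbij' (fun J i => m i - J i) (fun J i => m i - J i) (fun J hJ => ?_)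
    (fun J hJ => reflect_mem_boxLayer hJ) (fun J hJ => ?_) (fun J hJ => ?_)
  · simpa using reflect_mem_boxLayer (mem_coe.1 hJ)
  · exact reflect_reflect (mem_boxLayer.1 (mem_coe.1 hJ)).1
  · exact reflect_reflect (mem_boxLayer.1 (mem_coe.1 hJ)).1

theorem sum_Icc_w {n : ℕ} (m : Fin n → ℕ) {a b : ℤ} (hab : a - 1 ≤ b) :
    ∑ i ∈ Icc a b, w n m i = dCount n m b - dCount n m (a - 1) :=
  Int.sum_Icc_sub_sub_one (fun i => (dCount n m i : ℤ)) hab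

theorem cons_mem_boxLayer_iff {n : ℕ} {m : Fin (n + 1) → ℕ} {j : ℤ} {k : ℕ} {J : Fin n → ℕ} :
    Fin.cons k J ∈ boxLayer (n + 1) m j ↔ k ≤ m 0 ∧ J ∈ boxLayer n (Fin.tail m) (j - k) := by
  simp only [mem_boxLayer, Fin.forall_fin_succ, Fin.sum_univ_succ, Fin.cons_zero,
    Fin.cons_succ, Fin.tail, eq_sub_iff_add_eq', and_assoc]

theorem dCount_succ (n : ℕ) (m : Fin (n + 1) → ℕ) (j : ℤ) :
    dCount (n + 1) m j = ∑ k ∈ range (m 0 + 1), dCount n (Fin.tail m) (j - k) := by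
  simp only [dCount_eq_card_boxLayer]
  rw [← card_sigma]
  refine card_nbij' (fun J => ⟨J 0, Fin.tail J⟩) (fun p => Fin.cons p.1 p.2) ?_ ?_ ?_ ?_
  · intro J hJ
    rw [mem_coe, ← Fin.cons_self_tail J, cons_mem_boxLayer_iff] at hJ
    simpa [Nat.lt_succ_iff] using hJ
  · rintro ⟨k, J⟩ hkJ
    simpa [cons_mem_boxLayer_iff, Nat.lt_succ_iff] using hkJ
  · intro J _
    exact Fin.cons_self_tail J
  · rintro ⟨k, J⟩ _
    simp

theorem w_succ (n : ℕ) (m : Fin (n + 1) → ℕ) (j : ℤ) :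
    w (n + 1) m j = dCount n (Fin.tail m) j - dCount n (Fin.tail m) (j - m 0 - 1) := by
  have shift (k : ℕ) : j - 1 - k = j - (k + 1 : ℕ) := by push_cast; ring
  simp only [w, dCount_succ, Nat.cast_sum, shift, ← sum_sub_distrib]
  rw [sum_range_sub' (fun k : ℕ => (dCount n (Fin.tail m) (j - k) : ℤ))]
  simp [sub_sub]

theorem w_recursion_large_general (n : ℕ) (m : Fin (n + 1) → ℕ)
    (r : ℤ) (hr : 0 ≤ (∑ i, (m i : ℤ)) - 2 * r)
    (j : ℤ) (hj2 : j ≤ r) :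
    w (n + 1) m j
      = ∑ i ∈ Finset.Icc (j - m 0) ((∑ x, (Fin.tail m x : ℤ)) - j), w n (Fin.tail m) i := by
  have hsum : ∑ i, (m i : ℤ) = m 0 + ∑ x, (Fin.tail m x : ℤ) := Fin.sum_univ_succ _
  rw [sum_Icc_w _ (by omega), dCount_reflect, w_succ]

/-- For a sorted tuple `m = (m_1,…,m_n)` with `n ≥ 3`, `r` the largest integer with
`|m| − 2r ≥ 0` and `r^1` the largest integer with `|m^1| − 2r^1 ≥ 0` (`m^1 = (m_2,…,m_n)`):
for every integer `j` with `r^1 < j ≤ r`,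
`w(m,j) = w(m^1, j−m_1) + ⋯ + w(m^1, |m^1| − j)`. -/
theorem w_recursion_large (n : ℕ) (hn : 2 ≤ n) (m : Fin (n + 1) → ℕ) (hmono : Monotone m)
    (r : ℤ) (hr : 0 ≤ (∑ i, (m i : ℤ)) - 2 * r)
    (hrmax : ∀ s : ℤ, 0 ≤ (∑ i, (m i : ℤ)) - 2 * s → s ≤ r)
    (r1 : ℤ) (hr1 : 0 ≤ (∑ i, (Fin.tail m i : ℤ)) - 2 * r1)
    (hr1max : ∀ s : ℤ, 0 ≤ (∑ i, (Fin.tail m i : ℤ)) - 2 * s → s ≤ r1)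
    (j : ℤ) (hj1 : r1 < j) (hj2 : j ≤ r) :
    w (n + 1) m j
      = ∑ i ∈ Finset.Icc (j - m 0) ((∑ x, (Fin.tail m x : ℤ)) - j), w n (Fin.tail m) i :=
  w_recursion_large_general n m r hr j hj2
end

section
/- Let k ≥ 1 be an integer and m = (m_1,…,m_n) an n-tuple of nonnegative integers. If 0 ≤ |m| − k + 1 < k and there exists an index i with m_i ≥ k, then w(m, |m| − k + 1) = 0. -/
open Finsupp

section Slices

variable {n : ℕ}

lemma sum_add_single_one (J : Fin n → ℕ) (i : Fin n) :
    ∑ x, ((J + Pi.single i 1 : Fin n → ℕ) x : ℤ) = ∑ x, (J x : ℤ) + 1 := by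
  simp [Finset.sum_add_distrib, Pi.single_apply, Nat.cast_ite]

lemma sum_add_le_sum_add_of_le {J m : Fin n → ℕ} (hJ : J ≤ m) (i : Fin n) :
    ∑ x, (J x : ℤ) + m i ≤ ∑ x, (m x : ℤ) + J i := by
  rw [← Finset.sum_erase_add _ _ (Finset.mem_univ i),
    ← Finset.sum_erase_add _ _ (Finset.mem_univ i)]
  have : ∑ x ∈ Finset.univ.erase i, (J x : ℤ) ≤ ∑ x ∈ Finset.univ.erase i, (m x : ℤ) :=
    Finset.sum_le_sum fun x _ => Int.ofNat_le.mpr (hJ x)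
  omega

/-- In the range `|m| - m i < j ≤ m i` the `i`-th coordinate of a point of the slice `|J| = j`
is neither `0` nor `m i`, so raising it by one is a bijection from slice `j - 1` onto slice `j`. -/
lemma dCount_eq_dCount_sub_one {m : Fin n → ℕ} {j : ℤ} (i : Fin n)
    (hlo : ∑ x, (m x : ℤ) - m i < j) (hhi : j ≤ m i) :
    dCount n m j = dCount n m (j - 1) := by
  unfold dCount
  symm
  rw [← Set.ncard_image_of_injective _ (add_left_injective (Pi.single i 1))]
  congr 1
  ext J
  simp only [Set.mem_image, Set.mem_ofPred_eq]
  constructor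
  · rintro ⟨J, ⟨hJm, hJsum⟩, rfl⟩
    refine ⟨fun x => ?_, by rw [sum_add_single_one]; omega⟩
    rcases eq_or_ne x i with rfl | hx
    · have hJx : (J x : ℤ) ≤ ∑ y, (J y : ℤ) :=
        Finset.single_le_sum (fun y _ => Int.natCast_nonneg (J y)) (Finset.mem_univ x)
      rw [Pi.add_apply, Pi.single_eq_same]
      omega
    · simpa [hx] using hJm x
  · rintro ⟨hJm, hJsum⟩
    have hJi_pos : 1 ≤ J i := by
      have := sum_add_le_sum_add_of_le hJm i
      omega
    have hJi : Pi.single i 1 ≤ J := fun x => by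
      rcases eq_or_ne x i with rfl | hx <;> simp [*]
    refine ⟨J - Pi.single i 1, ⟨fun x => tsub_le_self.trans (hJm x), ?_⟩,
      tsub_add_cancel_of_le hJi⟩
    have hsum := sum_add_single_one (J - Pi.single i 1) i
    rw [tsub_add_cancel_of_le hJi] at hsum
    omega

lemma w_eq_zero_of_lt_of_le {m : Fin n → ℕ} {j : ℤ} (i : Fin n)
    (hlo : ∑ x, (m x : ℤ) - m i < j) (hhi : j ≤ m i) : w n m j = 0 := by
  rw [w, dCount_eq_dCount_sub_one i hlo hhi, sub_self]

end Slices

theorem w_vanishes_general (n k : ℕ) (m : Fin n → ℕ)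
    (h1 : (∑ i, (m i : ℤ)) - k + 1 < k)
    (hex : ∃ i, k ≤ m i) :
    w n m ((∑ i, (m i : ℤ)) - k + 1) = 0 := by
  obtain ⟨i, hki⟩ := hex
  have hki : (k : ℤ) ≤ m i := by exact_mod_cast hki
  exact w_eq_zero_of_lt_of_le i (by omega) (by omega)

/-- If `0 ≤ |m| − k + 1 < k` and some `m_i ≥ k`, then `w(m, |m| − k + 1) = 0`. -/
theorem w_vanishes (n k : ℕ) (hk : 1 ≤ k) (m : Fin n → ℕ)
    (h0 : 0 ≤ (∑ i, (m i : ℤ)) - k + 1) (h1 : (∑ i, (m i : ℤ)) - k + 1 < k)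
    (hex : ∃ i, k ≤ m i) :
    w n m ((∑ i, (m i : ℤ)) - k + 1) = 0 :=
  w_vanishes_general n k m h1 hex
end

section
/- Suppose n ≥ 2 and m_1 = k − p for some integer p with 1 ≤ p ≤ k. Then there exist invertible complex matrices P and Q such that P · A_k(m) · Q equals the block upper bidiagonal matrix (with the same block sizes as A_k(m)) whose diagonal block in position (s,s) is the identity matrix for every s ≠ p and the zero matrix for s = p, whose superdiagonal block in position (s,s+1) is A_s(m^1) for s = 1,…,k, and whose remaining blocks are zero; here m^1 = (m_2,…,m_n). -/
open Finsupp

/-- The matrix `A_{j+1}(m)` of `f_{j+1,m} : V_j → V_{j+1}` with respect to the bases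
`{e_J}`, acting on row vectors: rows are indexed by the domain basis, columns by the
codomain basis, and `A J I` is the coefficient of `e_I` in `f(e_J)`.  (With respect to the
lexicographic order on multiindices this is exactly the matrix of the paper.) -/
noncomputable def Amat (n : ℕ) (m : Fin n → ℕ) (j : ℕ) :
    Matrix (MIdx n j) (MIdx n (j + 1)) ℂ :=
  Matrix.of fun J I => fMap n m j (Finsupp.single J 1) I

lemma MIdx.le (n j : ℕ) (J : MIdx n j) (i : Fin n) : J.1 i ≤ j := by
  calc J.1 i ≤ ∑ x, J.1 x :=
    Finset.single_le_sum (fun _ _ => Nat.zero_le _) (Finset.mem_univ i)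
  _ = j := J.2

instance MIdx.finite (n j : ℕ) : Finite (MIdx n j) := by
  apply Finite.of_injective
    (fun J : MIdx n j => fun i => (⟨J.1 i, Nat.lt_succ_of_le (MIdx.le n j J i)⟩ : Fin (j + 1)))
  intro J K h
  exact Subtype.ext (funext fun i => by simpa using congrFun h i)

noncomputable instance MIdx.fintype (n j : ℕ) : Fintype (MIdx n j) :=
  Fintype.ofFinite _

/-!
The entry of `A_k(m)` at `(e_J, e_I)` is nonzero only if `I = J + 1ᵢ`. For `i = 1` this is a
diagonal block entry, equal to `(j₁ + 1)(m₁ − j₁)` times the identity in the remaining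
coordinates; for `i ≥ 2` it is a superdiagonal block entry, namely the entry of `A_s(m¹)` at the
tails of `J` and `I`. Scaling rows and columns by nonzero factors depending only on the first
coordinate therefore leaves the superdiagonal blocks unchanged and can be arranged to turn
every diagonal block into the identity, except the one with `j₁ = m₁`, whose coefficient is 0.
-/

lemma incr_zero_eq_iff {n : ℕ} (J I : Fin (n + 1) → ℕ) :
    incr J 0 = I ↔ I 0 = J 0 + 1 ∧ Fin.tail J = Fin.tail I := by
  have h : incr J 0 = Fin.cons (J 0 + 1) (Fin.tail J) := by
    funext x
    cases x using Fin.cases <;> simp [incr, Fin.tail]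
  rw [h, ← Fin.cons_self_tail I, Fin.cons_inj]
  simp only [Fin.cons_zero, Fin.tail_cons, eq_comm]

lemma incr_succ_eq_iff {n : ℕ} (J I : Fin (n + 1) → ℕ) (t : Fin n) :
    incr J t.succ = I ↔ I 0 = J 0 ∧ incr (Fin.tail J) t = Fin.tail I := by
  have h : incr J t.succ = Fin.cons (J 0) (incr (Fin.tail J) t) := by
    funext x
    cases x using Fin.cases <;>
      simp [incr, Fin.tail, Function.update_apply, (Fin.succ_ne_zero t).symm]
  rw [h, ← Fin.cons_self_tail I, Fin.cons_inj]
  simp only [Fin.cons_zero, Fin.tail_cons, eq_comm]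

lemma Amat_apply (n : ℕ) (m : Fin n → ℕ) (j : ℕ) (J : MIdx n j) (I : MIdx n (j + 1)) :
    Amat n m j J I
      = ∑ i, ((J.1 i + 1 : ℂ) * (m i - J.1 i)) * if incr J.1 i = I.1 then 1 else 0 := by
  simp only [Amat, fMap, Matrix.of_apply, Finsupp.lift_apply]
  rw [Finsupp.sum_single_index (by simp)]
  simp only [one_smul, Finsupp.finsetSum_apply, Finsupp.smul_apply, Finsupp.single_apply,
    smul_eq_mul, Subtype.ext_iff]

section Blocks

variable {n j : ℕ} (m : Fin (n + 1) → ℕ) (J : MIdx (n + 1) j) (I : MIdx (n + 1) (j + 1))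

lemma Amat_succ_apply_of_eq_add_one (h : I.1 0 = J.1 0 + 1) :
    Amat (n + 1) m j J I
      = (J.1 0 + 1 : ℂ) * (m 0 - J.1 0) * if Fin.tail J.1 = Fin.tail I.1 then 1 else 0 := by
  simp [Amat_apply, Fin.sum_univ_succ, incr_zero_eq_iff, incr_succ_eq_iff, h]

lemma Amat_succ_apply_of_eq (h : I.1 0 = J.1 0) (hJ : ∑ i, Fin.tail J.1 i = j - J.1 0)
    (hI : ∑ i, Fin.tail I.1 i = j - J.1 0 + 1) :
    Amat (n + 1) m j J I
      = Amat n (Fin.tail m) (j - J.1 0) ⟨Fin.tail J.1, hJ⟩ ⟨Fin.tail I.1, hI⟩ := by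
  simp [Amat_apply, Fin.sum_univ_succ, incr_zero_eq_iff, incr_succ_eq_iff, h, Fin.tail]

lemma Amat_succ_apply_of_ne (h₁ : I.1 0 ≠ J.1 0 + 1) (h₂ : I.1 0 ≠ J.1 0) :
    Amat (n + 1) m j J I = 0 := by
  simp [Amat_apply, Fin.sum_univ_succ, incr_zero_eq_iff, incr_succ_eq_iff, h₁, h₂]

end Blocks

section Scale

variable {K : Type*} [Field K] [CharZero K]

noncomputable def blockScale (a : ℕ) : ℕ → K
  | 0 => 1
  | j + 1 => if j = a then 1 else blockScale a j / ((j + 1) * (a - j))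

lemma natCast_succ_mul_sub_ne_zero {a j : ℕ} (h : j ≠ a) : ((j + 1) * (a - j) : K) ≠ 0 :=
  mul_ne_zero (Nat.cast_add_one_ne_zero j) (sub_ne_zero.2 (Nat.cast_injective.ne h.symm))

lemma blockScale_ne_zero (a j : ℕ) : blockScale (K := K) a j ≠ 0 := by
  induction j with
  | zero => exact one_ne_zero
  | succ j ih =>
    rw [blockScale]
    split_ifs with h
    · exact one_ne_zero
    · exact div_ne_zero ih (natCast_succ_mul_sub_ne_zero h)

lemma blockScale_inv_mul_coeff_mul_blockScale_succ (a j : ℕ) :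
    (blockScale a j)⁻¹ * ((j + 1) * (a - j)) * blockScale a (j + 1)
      = if j = a then (0 : K) else 1 := by
  rw [blockScale]
  split_ifs with h
  · simp [h]
  · have : (a - j : K) ≠ 0 := sub_ne_zero.2 (Nat.cast_injective.ne (Ne.symm h))
    field_simp [blockScale_ne_zero a j]

end Scale

theorem Amat_row_col_equiv (n k : ℕ) (m : Fin (n + 1) → ℕ) :
    ∃ (P : Matrix (MIdx (n + 1) (k - 1)) (MIdx (n + 1) (k - 1)) ℂ)
      (Q : Matrix (MIdx (n + 1) (k - 1 + 1)) (MIdx (n + 1) (k - 1 + 1)) ℂ),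
      IsUnit P ∧ IsUnit Q ∧
      P * Amat (n + 1) m (k - 1) * Q
        = Matrix.of fun (J : MIdx (n + 1) (k - 1)) (I : MIdx (n + 1) (k - 1 + 1)) =>
            if I.1 0 = J.1 0 + 1 then
              (if J.1 0 = m 0 then 0 else if Fin.tail J.1 = Fin.tail I.1 then 1 else 0)
            else if h : I.1 0 = J.1 0 then
              Amat n (Fin.tail m) (k - 1 - J.1 0)
                ⟨Fin.tail J.1, by
                  have hJ := J.2
                  rw [Fin.sum_univ_succ] at hJ
                  simp only [Fin.tail]
                  omega⟩
                ⟨Fin.tail I.1, by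
                  have hle : J.1 0 ≤ k - 1 := MIdx.le _ _ J 0
                  have hI := I.2
                  rw [Fin.sum_univ_succ] at hI
                  simp only [Fin.tail]
                  omega⟩
            else 0 := by
  refine ⟨Matrix.diagonal fun J => (blockScale (m 0) (J.1 0))⁻¹,
    Matrix.diagonal fun I => blockScale (m 0) (I.1 0),
    Matrix.isUnit_diagonal.2 <| Pi.isUnit_iff.2 fun _ =>
      (inv_ne_zero (blockScale_ne_zero _ _)).isUnit,
    Matrix.isUnit_diagonal.2 <| Pi.isUnit_iff.2 fun _ => (blockScale_ne_zero _ _).isUnit, ?_⟩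
  ext J I
  simp only [Matrix.mul_diagonal, Matrix.diagonal_mul, Matrix.of_apply]
  by_cases h₁ : I.1 0 = J.1 0 + 1
  · rw [if_pos h₁, Amat_succ_apply_of_eq_add_one m J I h₁, h₁, ← mul_assoc,
      mul_right_comm _ (ite _ _ _), blockScale_inv_mul_coeff_mul_blockScale_succ]
    split_ifs <;> simp
  rw [if_neg h₁]
  by_cases h₂ : I.1 0 = J.1 0
  · rw [dif_pos h₂, Amat_succ_apply_of_eq m J I h₂ _ _, congrArg (blockScale (m 0)) h₂,
      mul_right_comm, inv_mul_cancel₀ (blockScale_ne_zero _ _), one_mul]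
  · rw [dif_neg h₂, Amat_succ_apply_of_ne m J I h₁ h₂, mul_zero, zero_mul]
end

section
/- Let n = 2 and m = (m_1, m_2) a pair of nonnegative integers, and k ≥ 1. The kernel of f_{k,m} : V_{k−1} → V_k has dimension 1 if 0 ≤ m_1 < k, 0 ≤ m_2 < k, and 0 ≤ m_1 + m_2 − k + 1 < k; otherwise f_{k,m} is injective. -/
open Finsupp

/-!
For two factors write `K = k - 1`. Then `V 2 K` has basis `e_(b, K - b)`, `b ≤ K`, and for the
coefficients `c_b` of `x` the equation `f x = 0` is the two-term recurrence
`(b + 1)(m₀ - b) c_b + (K - b)(m₁ - K + b + 1) c_{b+1} = 0`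
together with `(K + 1)(m₁ - K) c_0 = 0`. For `b < K` the weight of `c_b` vanishes only at
`b = m₀` and that of `c_{b+1}` only at `b = K - m₁ - 1`. Propagating zeros forward from `c_0`
and backward from `c_{K+1} = 0` kills every solution unless `K - m₁ ≤ m₀ ≤ K`; in that case
a solution is determined by `c_{K - m₁}`, and `(-1)^b C(b, K - m₁) C(K - b, K - m₀)` is a
nonzero one.
-/

noncomputable def coeffAt {n j : ℕ} (J : Fin n → ℕ) : V n j →ₗ[ℂ] ℂ :=
  if h : ∑ i, J i = j then Finsupp.lapply ⟨J, h⟩ else 0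

lemma coeffAt_val {n j : ℕ} (J : MIdx n j) (x : V n j) : coeffAt J.1 x = x J := by
  simp [coeffAt, J.2]

lemma coeffAt_eq_zero_of_sum_ne {n j : ℕ} {J : Fin n → ℕ} (h : ∑ i, J i ≠ j) (x : V n j) :
    coeffAt J x = 0 := by
  simp [coeffAt, h]

lemma eq_zero_of_coeffAt {n j : ℕ} {x : V n j} (h : ∀ J : Fin n → ℕ, coeffAt J x = 0) :
    x = 0 :=
  Finsupp.ext fun J => (coeffAt_val J x).symm.trans (h J.1)

lemma coeffAt_single {n j : ℕ} (J : Fin n → ℕ) (J' : MIdx n j) (c : ℂ) :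
    coeffAt J (Finsupp.single J' c) = if J'.1 = J then c else 0 := by
  unfold coeffAt
  split_ifs with h h' h'
  · rw [Finsupp.lapply_apply, Finsupp.single_apply, if_pos (Subtype.ext h')]
  · rw [Finsupp.lapply_apply, Finsupp.single_apply, if_neg (mt (congrArg Subtype.val) h')]
  · exact absurd (h' ▸ J'.2) h
  · rfl

instance {n j : ℕ} : Finite (MIdx n j) :=
  Set.Finite.to_subtype (s := {J : Fin n → ℕ | ∑ i, J i = j})
    ((Finset.Nat.antidiagonalTuple n j).finite_toSet.subset
      fun _ hJ => Finset.Nat.mem_antidiagonalTuple.mpr hJ)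

lemma incr_eq_iff {n : ℕ} {J J' : Fin n → ℕ} {i : Fin n} :
    incr J i = J' ↔ 0 < J' i ∧ J = Function.update J' i (J' i - 1) := by
  constructor
  · rintro rfl
    simp [incr]
  · rintro ⟨h, rfl⟩
    ext l
    by_cases hl : l = i
    · subst hl
      simp only [incr, Function.update_self]
      omega
    · simp [incr, hl]

/-- The factor `J i` kills the term in which `J i - 1` is truncated. -/
theorem coeffAt_fMap {n : ℕ} (m : Fin n → ℕ) {j : ℕ} (x : V n j) (J : Fin n → ℕ) :
    coeffAt J (fMap n m j x) =
      ∑ i, (J i : ℂ) * ((m i : ℂ) + 1 - J i) * coeffAt (Function.update J i (J i - 1)) x := by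
  induction x using Finsupp.induction_linear with
  | zero => simp
  | add x y hx hy => simp only [map_add, hx, hy, mul_add, Finset.sum_add_distrib]
  | single J₀ c =>
    simp only [fMap, Finsupp.lift_apply, Finsupp.sum_single_index, zero_smul, map_smul, map_sum,
      coeffAt_single, smul_eq_mul, Finset.mul_sum]
    refine Finset.sum_congr rfl fun i _ => ?_
    by_cases h : incr J₀.1 i = J
    · obtain ⟨hpos, hJ₀⟩ := incr_eq_iff.mp h
      have hi : (J₀.1 i : ℂ) = J i - 1 := by
        rw [hJ₀, Function.update_self, Nat.cast_sub hpos, Nat.cast_one]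
      rw [if_pos h, if_pos hJ₀, hi]
      ring
    · have hJi : J₀.1 = Function.update J i (J i - 1) → J i = 0 := fun hJ =>
        by_contra fun hne => h (incr_eq_iff.mpr ⟨Nat.pos_of_ne_zero hne, hJ⟩)
      rw [if_neg h]
      split_ifs with hJ
      · simp [hJi hJ]
      · simp

lemma natCast_mul_choose_pred {R : Type*} [CommRing R] (n r : ℕ) :
    (n : R) * (n - 1).choose r = ((n : R) - r) * n.choose r := by
  rcases n with _ | n
  · rcases r with _ | r <;> simp
  rcases le_or_gt r (n + 1) with hr | hr
  · have := congrArg (Nat.cast (R := R)) (Nat.choose_mul_succ_eq n r)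
    push_cast [Nat.cast_sub hr] at this
    rw [Nat.add_sub_cancel]
    push_cast
    linear_combination this
  · rw [Nat.choose_eq_zero_of_lt hr, Nat.choose_eq_zero_of_lt (by omega : n + 1 - 1 < r)]
    simp

lemma vecCons_eta_two (J : Fin 2 → ℕ) : J = ![J 0, J 1] := by
  funext i
  fin_cases i <;> rfl

theorem coeffAt_fMap_two (m : Fin 2 → ℕ) {j : ℕ} (x : V 2 j) (a b : ℕ) :
    coeffAt ![a, b] (fMap 2 m j x) =
      a * ((m 0 : ℂ) + 1 - a) * coeffAt ![a - 1, b] x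
        + b * ((m 1 : ℂ) + 1 - b) * coeffAt ![a, b - 1] x := by
  rw [coeffAt_fMap, Fin.sum_univ_two]
  congr 4 <;> funext i <;> fin_cases i <;> rfl

lemma coeffAt_two_eq_zero_of_lt {K b : ℕ} (hb : K < b) (x : V 2 K) :
    coeffAt ![b, K - b] x = 0 :=
  coeffAt_eq_zero_of_sum_ne (by simp; omega) x

lemma eq_zero_of_coeffAt_two {K : ℕ} {x : V 2 K} (h : ∀ b ≤ K, coeffAt ![b, K - b] x = 0) :
    x = 0 := by
  refine eq_zero_of_coeffAt fun J => ?_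
  by_cases hJ : J 0 + J 1 = K
  · rw [vecCons_eta_two J, show J 1 = K - J 0 by omega]
    exact h _ (by omega)
  · exact coeffAt_eq_zero_of_sum_ne (by simpa [Fin.sum_univ_two] using hJ) x

section TwoFactors

variable {K : ℕ} {m : Fin 2 → ℕ} {x : V 2 K}

lemma coeffAt_zero_eq_zero_of_fMap_eq_zero (hx : fMap 2 m K x = 0) (h : m 1 ≠ K) :
    coeffAt ![0, K] x = 0 := by
  have hrec := coeffAt_fMap_two m x 0 (K + 1)
  rw [hx, map_zero, Nat.add_sub_cancel, Nat.cast_zero, zero_mul, zero_mul, zero_add] at hrec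
  refine (mul_eq_zero.mp hrec.symm).resolve_left (mul_ne_zero ?_ ?_)
  · exact_mod_cast K.succ_ne_zero
  · exact_mod_cast (show (m 1 : ℤ) + 1 - (K + 1 : ℕ) ≠ 0 by omega)

lemma coeffAt_succ_eq_zero (hx : fMap 2 m K x = 0) {b : ℕ} (hb : b < K) (hβ : m 1 + b + 1 ≠ K)
    (h : coeffAt ![b, K - b] x = 0) : coeffAt ![b + 1, K - (b + 1)] x = 0 := by
  have hrec := coeffAt_fMap_two m x (b + 1) (K - b)
  rw [hx, map_zero, Nat.add_sub_cancel, h, mul_zero, zero_add, Nat.sub_sub] at hrec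
  refine (mul_eq_zero.mp hrec.symm).resolve_left (mul_ne_zero ?_ ?_)
  · exact_mod_cast (show K - b ≠ 0 by omega)
  · exact_mod_cast (show (m 1 : ℤ) + 1 - (K - b : ℕ) ≠ 0 by omega)

lemma coeffAt_eq_zero_of_succ (hx : fMap 2 m K x = 0) {b : ℕ} (hα : b ≠ m 0)
    (h : coeffAt ![b + 1, K - (b + 1)] x = 0) : coeffAt ![b, K - b] x = 0 := by
  have hrec := coeffAt_fMap_two m x (b + 1) (K - b)
  rw [hx, map_zero, Nat.add_sub_cancel, Nat.sub_sub, h, mul_zero, add_zero] at hrec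
  refine (mul_eq_zero.mp hrec.symm).resolve_left (mul_ne_zero ?_ ?_)
  · exact_mod_cast b.succ_ne_zero
  · exact_mod_cast (show (m 0 : ℤ) + 1 - (b + 1 : ℕ) ≠ 0 by omega)

lemma coeffAt_eq_zero_of_forward (hx : fMap 2 m K x = 0) {t s : ℕ} (hs : s ≤ K)
    (hβ : ∀ b, t ≤ b → b < s → m 1 + b + 1 ≠ K) (ht : coeffAt ![t, K - t] x = 0) :
    ∀ b, t ≤ b → b ≤ s → coeffAt ![b, K - b] x = 0 := by
  intro b htb
  induction b, htb using Nat.le_induction with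
  | base => exact fun _ => ht
  | succ b htb ih =>
    exact fun hbs => coeffAt_succ_eq_zero hx (by omega) (hβ b htb hbs) (ih (Nat.le_of_succ_le hbs))

lemma coeffAt_eq_zero_of_backward (hx : fMap 2 m K x = 0) {t : ℕ}
    (hα : ∀ b, t ≤ b → b ≤ K → b ≠ m 0) : ∀ b, t ≤ b → coeffAt ![b, K - b] x = 0 := by
  intro b htb
  rcases le_or_gt b (K + 1) with hb | hb
  · refine Nat.decreasingInduction' (fun k hk hbk ih => ?_) hb
      (coeffAt_two_eq_zero_of_lt K.lt_succ_self x)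
    exact coeffAt_eq_zero_of_succ hx (hα k (htb.trans hbk) (by omega)) ih
  · exact coeffAt_two_eq_zero_of_lt (by omega) x

lemma coeffAt_eq_zero_of_add_m1_lt (hx : fMap 2 m K x = 0) {b : ℕ} (hb : b + m 1 < K) :
    coeffAt ![b, K - b] x = 0 :=
  coeffAt_eq_zero_of_forward hx (s := K - m 1 - 1) (by omega) (fun _ _ _ => by omega)
    (coeffAt_zero_eq_zero_of_fMap_eq_zero hx (by omega)) b b.zero_le (by omega)

lemma coeffAt_eq_zero_of_m0_lt (hx : fMap 2 m K x = 0) {b : ℕ} (hb : m 0 < b) :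
    coeffAt ![b, K - b] x = 0 :=
  coeffAt_eq_zero_of_backward hx (t := m 0 + 1) (fun _ _ _ => by omega) b hb

theorem fMap_two_injective (h : K < m 0 ∨ K < m 1 ∨ m 0 + m 1 < K) :
    Function.Injective (fMap 2 m K) := by
  refine (injective_iff_map_eq_zero _).mpr fun x hx => eq_zero_of_coeffAt_two fun b hb => ?_
  rcases h with h | h | h
  · exact coeffAt_eq_zero_of_backward hx (fun _ _ _ => by omega) b b.zero_le
  · exact coeffAt_eq_zero_of_forward hx le_rfl (fun _ _ _ => by omega)
      (coeffAt_zero_eq_zero_of_fMap_eq_zero hx (by omega)) b b.zero_le hb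
  · rcases lt_or_ge (b + m 1) K with hb' | hb'
    · exact coeffAt_eq_zero_of_add_m1_lt hx hb'
    · exact coeffAt_eq_zero_of_m0_lt hx (by omega)

lemma eq_zero_of_fMap_two_eq_zero (hm0 : m 0 ≤ K) (hm1 : m 1 ≤ K) (hx : fMap 2 m K x = 0)
    (hp : coeffAt ![K - m 1, m 1] x = 0) : x = 0 := by
  refine eq_zero_of_coeffAt_two fun b hb => ?_
  rcases lt_or_ge (b + m 1) K with hb' | hb'
  · exact coeffAt_eq_zero_of_add_m1_lt hx hb'
  rcases le_or_gt b (m 0) with hb'' | hb''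
  · refine coeffAt_eq_zero_of_forward hx (t := K - m 1) hm0 (fun _ _ _ => by omega) ?_ b
      (by omega) hb''
    rwa [Nat.sub_sub_self hm1]
  · exact coeffAt_eq_zero_of_m0_lt hx hb''

variable (K m) in
noncomputable def kerVecTwo : V 2 K :=
  Finsupp.equivFunOnFinite.symm fun J =>
    (-1 : ℂ) ^ J.1 0 * (J.1 0).choose (K - m 1) * (J.1 1).choose (K - m 0)

lemma coeffAt_kerVecTwo (a b : ℕ) :
    coeffAt ![a, b] (kerVecTwo K m) =
      if a + b = K then (-1 : ℂ) ^ a * a.choose (K - m 1) * b.choose (K - m 0) else 0 := by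
  have hsum : ∑ i, ![a, b] i = a + b := by simp
  unfold coeffAt
  simp only [hsum]
  split_ifs
  · simp [kerVecTwo]
  · rfl

/-- The factors `(m₀ + 1 - a)` and `(m₁ + 1 - b)` of the recurrence are absorbed by the binomials
through `n C(n - 1, r) = (n - r) C(n, r)`, after which the two terms cancel by their signs. -/
theorem fMap_kerVecTwo (hm0 : m 0 ≤ K) (hm1 : m 1 ≤ K) : fMap 2 m K (kerVecTwo K m) = 0 := by
  refine eq_zero_of_coeffAt_two fun a ha => ?_
  obtain ⟨b, hb⟩ : ∃ b, K + 1 - a = b := ⟨_, rfl⟩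
  have hab : (b : ℂ) = K + 1 - a := by rw [← hb, Nat.cast_sub ha]; push_cast; ring
  have hA : ((m 1 : ℂ) + 1 - b) * a.choose (K - m 1) = a * (a - 1).choose (K - m 1) := by
    rw [natCast_mul_choose_pred, Nat.cast_sub hm1, hab]; ring
  have hB : ((m 0 : ℂ) + 1 - a) * b.choose (K - m 0) = b * (b - 1).choose (K - m 0) := by
    rw [natCast_mul_choose_pred, Nat.cast_sub hm0, hab]; ring
  rw [hb, coeffAt_fMap_two, coeffAt_kerVecTwo, coeffAt_kerVecTwo]
  split_ifs with h1 h2 h2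
  · obtain ⟨a, rfl⟩ : ∃ a', a = a' + 1 := ⟨a - 1, by omega⟩
    rw [Nat.add_sub_cancel] at hA ⊢
    linear_combination (-1 : ℂ) ^ a * (a + 1 : ℕ) * (a.choose (K - m 1) : ℂ) * hB
      - (-1 : ℂ) ^ a * b * ((b - 1).choose (K - m 0) : ℂ) * hA
  · obtain rfl : b = 0 := by omega
    linear_combination (a : ℂ) * (-1) ^ (a - 1) * ((a - 1).choose (K - m 1) : ℂ) * hB
  · obtain rfl : a = 0 := by omega
    linear_combination (b : ℂ) * ((b - 1).choose (K - m 0) : ℂ) * hA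
  · omega

theorem finrank_ker_fMap_two (hm0 : m 0 ≤ K) (hm1 : m 1 ≤ K) (hK : K ≤ m 0 + m 1) :
    Module.finrank ℂ (LinearMap.ker (fMap 2 m K)) = 1 := by
  set v := kerVecTwo K m
  set φ : V 2 K →ₗ[ℂ] ℂ := coeffAt ![K - m 1, m 1]
  have hφv : φ v ≠ 0 := by
    rw [coeffAt_kerVecTwo, if_pos (by omega), Nat.choose_self, Nat.cast_one, mul_one]
    exact mul_ne_zero (pow_ne_zero _ (by norm_num))
      (Nat.cast_ne_zero.mpr (Nat.choose_pos (by omega)).ne')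
  have hv : (⟨v, fMap_kerVecTwo hm0 hm1⟩ : LinearMap.ker (fMap 2 m K)) ≠ 0 := fun h =>
    hφv (by rw [show v = 0 from congrArg Subtype.val h, map_zero])
  refine (finrank_eq_one_iff_of_nonzero' (V := LinearMap.ker (fMap 2 m K)) _ hv).mpr
    fun ⟨x, hx⟩ => ⟨φ x / φ v, Subtype.ext (sub_eq_zero.mp ?_)⟩
  refine eq_zero_of_fMap_two_eq_zero hm0 hm1 ?_ ?_
  · simp [LinearMap.mem_ker.mp hx, v, fMap_kerVecTwo hm0 hm1]
  · simp only [map_sub, Submodule.coe_smul, map_smul, smul_eq_mul]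
    exact sub_eq_zero.mpr (div_mul_cancel₀ _ hφv)

end TwoFactors

/-- For `n = 2`: `dim ker (f_{k,m} : V_{k−1} → V_k) = 1` if `0 ≤ m_1 < k`, `0 ≤ m_2 < k`
and `0 ≤ m_1 + m_2 − k + 1 < k`; otherwise `f_{k,m}` is injective. -/
theorem kernel_two_factors (k : ℕ) (hk : 1 ≤ k) (m : Fin 2 → ℕ) :
    ((m 0 < k ∧ m 1 < k ∧ 0 ≤ (m 0 : ℤ) + (m 1 : ℤ) - k + 1 ∧ (m 0 : ℤ) + (m 1 : ℤ) - k + 1 < k)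
      → Module.finrank ℂ (LinearMap.ker (fMap 2 m (k - 1))) = 1) ∧
    (¬ (m 0 < k ∧ m 1 < k ∧ 0 ≤ (m 0 : ℤ) + (m 1 : ℤ) - k + 1 ∧ (m 0 : ℤ) + (m 1 : ℤ) - k + 1 < k)
      → Function.Injective (fMap 2 m (k - 1))) := by
  obtain ⟨K, rfl⟩ : ∃ K, k = K + 1 := ⟨k - 1, by omega⟩
  rw [Nat.add_sub_cancel]
  exact ⟨fun h => finrank_ker_fMap_two (by omega) (by omega) (by omega),
    fun h => fMap_two_injective (by omega)⟩
end

section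
/- Suppose n ≥ 2 and m_1 = 0. Then every element of ker f_{k,m} is supported on basis vectors e_J with j_1 = 0, and dim ker f_{k,m} = dim ker f_{k,m^1}, where f_{k,m^1} : V'_{k−1} → V'_k is the analogous map built from the (n−1)-tuple m^1 = (m_2,…,m_n). -/
open Finsupp

/-!
If `v ∈ ker f_{k,m}` had some `e_J` with `j_p > m_p` in its support, pick such a `J` with `j_p`
maximal. The only basis vector of the support that `f_{k,m}` sends onto `e_{J+1_p}` is `e_J`
(any other would have `j'_p = j_p + 1`), so the coefficient of `e_{J+1_p}` in `f_{k,m} v` is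
`(j_p+1)(m_p-j_p) v_J ≠ 0`. For `m_1 = 0` this confines the kernel to the span of the `e_J` with
`j_1 = 0`, and prepending a zero to multiindices embeds `V'_j` onto that span, intertwining
`f_{k,m^1}` with `f_{k,m}`; hence the two kernels are isomorphic.
-/

theorem LinearMap.finrank_ker_eq_of_comp_eq {R M N M' N' : Type*} [Semiring R]
    [AddCommMonoid M] [AddCommMonoid N] [AddCommMonoid M'] [AddCommMonoid N']
    [Module R M] [Module R N] [Module R M'] [Module R N']
    {f : M →ₗ[R] N} {g : M' →ₗ[R] N'} {e : M' →ₗ[R] M} {e' : N' →ₗ[R] N}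
    (he : Function.Injective e) (he' : Function.Injective e') (h : f ∘ₗ e = e' ∘ₗ g)
    (hker : LinearMap.ker f ≤ LinearMap.range e) :
    Module.finrank R (LinearMap.ker g) = Module.finrank R (LinearMap.ker f) := by
  have hmap : (LinearMap.ker g).map e = LinearMap.ker f := by
    rw [← LinearMap.ker_comp_of_ker_eq_bot g (LinearMap.ker_eq_bot_of_injective he'), ← h,
      LinearMap.ker_comp, Submodule.map_comap_eq_of_le hker]
  rw [← hmap]
  exact (Submodule.equivMapOfInjective e he _).finrank_eq

theorem Finsupp.range_lmapDomain_eq_supported {α β R : Type*} [Semiring R] (u : α → β) :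
    LinearMap.range (Finsupp.lmapDomain R R u) = Finsupp.supported R R (Set.range u) := by
  rw [LinearMap.range_eq_map, ← Finsupp.supported_univ, Finsupp.lmapDomain_supported,
    Set.image_univ]

section Incr

variable {n : ℕ}

theorem incr_self (J : Fin n → ℕ) (i : Fin n) : incr J i i = J i + 1 :=
  Function.update_self _ _ _

theorem incr_of_ne (J : Fin n → ℕ) {i x : Fin n} (h : x ≠ i) : incr J i x = J x :=
  Function.update_of_ne h _ _

theorem incr_left_injective (i : Fin n) : Function.Injective fun J : Fin n → ℕ => incr J i := by
  intro J J' h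
  funext x
  have hx := congrFun h x
  by_cases hxi : x = i
  · subst hxi
    simp only [incr_self] at hx
    omega
  · simpa only [incr_of_ne _ hxi] using hx

theorem incr_apply_eq_of_incr_eq {J J' : Fin n → ℕ} {i p : Fin n} (h : incr J' i = incr J p)
    (hi : i ≠ p) : J' p = J p + 1 := by
  simpa only [incr_of_ne _ hi.symm, incr_self] using congrFun h p

theorem incr_cons_succ (a : ℕ) (J : Fin n → ℕ) (i : Fin n) :
    incr (Fin.cons a J) i.succ = Fin.cons a (incr J i) := by
  rw [incr, incr, Fin.cons_update, Fin.cons_succ]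

end Incr

theorem fMap_apply (n : ℕ) (m : Fin n → ℕ) (j : ℕ) (v : V n j) (K : MIdx n (j + 1)) :
    fMap n m j v K = ∑ J ∈ v.support, v J *
      ∑ i, if incr J.1 i = K.1 then ((J.1 i : ℂ) + 1) * ((m i : ℂ) - (J.1 i : ℂ)) else 0 := by
  rw [fMap, Finsupp.lift_apply, Finsupp.sum_apply, Finsupp.sum]
  refine Finset.sum_congr rfl fun J _ => ?_
  simp only [Finsupp.smul_apply, Finset.sum_apply', Finsupp.single_apply, smul_eq_mul,
    Subtype.ext_iff, mul_ite, mul_one, mul_zero]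

theorem apply_eq_zero_of_mem_ker_fMap {n : ℕ} {m : Fin n → ℕ} {j : ℕ} {v : V n j}
    (hv : v ∈ LinearMap.ker (fMap n m j)) (p : Fin n) (J : MIdx n j) (hJ : m p < J.1 p) :
    v J = 0 := by
  by_contra hvJ
  obtain ⟨J, hJ, hJmax⟩ := Finset.exists_max_image {J ∈ v.support | m p < J.1 p} (·.1 p)
    ⟨J, Finset.mem_filter.2 ⟨Finsupp.mem_support_iff.2 hvJ, hJ⟩⟩
  obtain ⟨hJsupp, hJp⟩ := Finset.mem_filter.1 hJ
  have hcoeff := DFunLike.congr_fun (LinearMap.mem_ker.1 hv)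
    ⟨incr J.1 p, by rw [sum_incr, J.2]⟩
  rw [fMap_apply, Finset.sum_eq_single_of_mem J hJsupp,
    Finset.sum_eq_single_of_mem p (Finset.mem_univ _), if_pos rfl] at hcoeff
  · have hmp : (m p : ℂ) - J.1 p ≠ 0 := sub_ne_zero.2 (Nat.cast_injective.ne hJp.ne)
    exact mul_ne_zero (Finsupp.mem_support_iff.1 hJsupp)
      (mul_ne_zero (Nat.cast_add_one_ne_zero _) hmp) hcoeff
  · intro i _ hi
    rw [if_neg fun h => by simpa using incr_apply_eq_of_incr_eq h hi]
  · intro J' hJ' hJ'J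
    refine mul_eq_zero_of_right _ (Finset.sum_eq_zero fun i _ => if_neg fun h => ?_)
    by_cases hi : i = p
    · subst hi
      exact hJ'J (Subtype.ext (incr_left_injective i h))
    · have hJ'p := incr_apply_eq_of_incr_eq h hi
      have := hJmax J' (Finset.mem_filter.2 ⟨hJ', by omega⟩)
      omega

namespace MIdx

def consZero (n j : ℕ) (J : MIdx n j) : MIdx (n + 1) j :=
  ⟨Fin.cons 0 J.1, by rw [Fin.sum_univ_succ, Fin.cons_zero, zero_add]; exact J.2⟩

theorem consZero_injective (n j : ℕ) : Function.Injective (consZero n j) :=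
  fun _ _ h =>
    Subtype.ext (Fin.cons_right_injective (α := fun _ => ℕ) 0 (congrArg Subtype.val h))

theorem range_consZero (n j : ℕ) : Set.range (consZero n j) = {K | K.1 0 = 0} := by
  ext K
  refine ⟨?_, fun hK => ?_⟩
  · rintro ⟨J, rfl⟩
    rfl
  · refine ⟨⟨Fin.tail K.1, ?_⟩, Subtype.ext ?_⟩
    · have hsum := K.2
      rwa [Fin.sum_univ_succ, hK, zero_add] at hsum
    · change Fin.cons 0 (Fin.tail K.1) = K.1
      rw [← hK, Fin.cons_self_tail]

end MIdx

theorem fMap_comp_lmapDomain_consZero {n : ℕ} {m : Fin (n + 1) → ℕ} (hm : m 0 = 0) (j : ℕ) :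
    fMap (n + 1) m j ∘ₗ Finsupp.lmapDomain ℂ ℂ (MIdx.consZero n j)
      = Finsupp.lmapDomain ℂ ℂ (MIdx.consZero n (j + 1)) ∘ₗ fMap n (Fin.tail m) j := by
  refine Finsupp.lhom_ext fun J c => ?_
  simp only [LinearMap.comp_apply, Finsupp.lmapDomain_apply, Finsupp.mapDomain_single, fMap,
    Finsupp.lift_apply, Finsupp.sum_single_index, zero_smul, Finsupp.mapDomain_smul,
    Finsupp.mapDomain_finsetSum, Fin.sum_univ_succ, MIdx.consZero, Fin.cons_zero, Fin.cons_succ,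
    hm, Nat.cast_zero, sub_zero, mul_zero, zero_add, Fin.tail, incr_cons_succ]

theorem kernel_first_weight_zero_general (n k : ℕ) (m : Fin (n + 1) → ℕ) (hm : m 0 = 0) :
    (∀ v ∈ LinearMap.ker (fMap (n + 1) m (k - 1)),
      ∀ J : MIdx (n + 1) (k - 1), J.1 0 ≠ 0 → v J = 0) ∧
    Module.finrank ℂ (LinearMap.ker (fMap (n + 1) m (k - 1)))
      = Module.finrank ℂ (LinearMap.ker (fMap n (Fin.tail m) (k - 1))) := by
  have hsupp : ∀ v ∈ LinearMap.ker (fMap (n + 1) m (k - 1)),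
      ∀ J : MIdx (n + 1) (k - 1), J.1 0 ≠ 0 → v J = 0 := fun v hv J hJ =>
    apply_eq_zero_of_mem_ker_fMap hv 0 J (by omega)
  refine ⟨hsupp, (LinearMap.finrank_ker_eq_of_comp_eq
    (Finsupp.mapDomain_injective (MIdx.consZero_injective n _))
    (Finsupp.mapDomain_injective (MIdx.consZero_injective n _))
    (fMap_comp_lmapDomain_consZero hm _) fun v hv => ?_).symm⟩
  rw [Finsupp.range_lmapDomain_eq_supported, MIdx.range_consZero, Finsupp.mem_supported']
  exact hsupp v hv

/-- If `m_1 = 0`, then every element of `ker f_{k,m}` is supported on basis vectors `e_J`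
with `j_1 = 0`, and `dim ker f_{k,m} = dim ker f_{k,m^1}` with `m^1 = (m_2,…,m_n)`. -/
theorem kernel_first_weight_zero (n k : ℕ) (hn : 1 ≤ n) (hk : 1 ≤ k)
    (m : Fin (n + 1) → ℕ) (hm : m 0 = 0) :
    (∀ v ∈ LinearMap.ker (fMap (n + 1) m (k - 1)),
      ∀ J : MIdx (n + 1) (k - 1), J.1 0 ≠ 0 → v J = 0) ∧
    Module.finrank ℂ (LinearMap.ker (fMap (n + 1) m (k - 1)))
      = Module.finrank ℂ (LinearMap.ker (fMap n (Fin.tail m) (k - 1))) :=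
  kernel_first_weight_zero_general n k m hm
end

section
/- Suppose |m| − k + 1 = k or |m| − k + 1 < 0 (i.e., |m| = 2k − 1 or |m| < k − 1). Then for any pairwise distinct complex numbers z_1,…,z_n, the master function Φ_{k,n}(t;z,m) has no critical points in X: for every t ∈ X there exists an index i, 1 ≤ i ≤ k, such that −Σ_{j=1}^n m_j/(t_i − z_j) + Σ_{q ≠ i} 2/(t_i − t_q) ≠ 0. -/
/-!
Put `T = ∏ⱼ (X - zⱼ)^{mⱼ}` and `p = ∏ᵢ (X - tᵢ)`. The equations of a critical point say exactly
that `T / p²` has zero residue at every `tᵢ`. For `deg F < 2k` the residues of `F / p²` sum to the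
coefficient of `X^{2k-1}` in `F` (its residue at infinity), as Hermite interpolation at the double
nodes shows. If `|m| = 2k - 1` this coefficient of `T` is `1`. If `|m| < k - 1`, the same identity
for `X^{r+1} T`, `r < k`, gives `∑ᵢ tᵢ^r T(tᵢ) / p'(tᵢ)² = 0`, so `T(tᵢ) = 0` by Vandermonde,
contradicting `tᵢ ≠ zⱼ`.
-/

open Polynomial Finset Lagrange

section LogDeriv

variable {K : Type*} [Field K]

theorem eval_derivative_X_sub_C_pow {x c : K} (hx : x ≠ c) (n : ℕ) :
    (derivative ((X - C c) ^ n)).eval x = (x - c) ^ n * (n / (x - c)) := by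
  have hxc : x - c ≠ 0 := sub_ne_zero.2 hx
  cases n with
  | zero => simp
  | succ n =>
    simp only [derivative_X_sub_C_pow, eval_mul, eval_C, eval_pow, eval_sub, eval_X,
      Nat.add_sub_cancel]
    field_simp
    ring

theorem eval_derivative_prod_X_sub_C_pow {ι : Type*} [DecidableEq ι] (s : Finset ι)
    (a : ι → K) (m : ι → ℕ) {x : K} (hx : ∀ j ∈ s, x ≠ a j) :
    (derivative (∏ j ∈ s, (X - C (a j)) ^ m j)).eval x =
      (∏ j ∈ s, (X - C (a j)) ^ m j).eval x * ∑ j ∈ s, (m j : K) / (x - a j) := by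
  induction s using Finset.induction_on with
  | empty => simp
  | insert b s hb ih =>
    rw [prod_insert hb, sum_insert hb, derivative_mul, eval_add, eval_mul, eval_mul, eval_mul,
      ih fun j hj => hx j (mem_insert_of_mem hj),
      eval_derivative_X_sub_C_pow (hx b (mem_insert_self b s))]
    simp only [eval_pow, eval_sub, eval_X, eval_C]
    ring

theorem eval_derivative_nodal {ι : Type*} [DecidableEq ι] (s : Finset ι) (v : ι → K) {x : K}
    (hx : ∀ j ∈ s, x ≠ v j) :
    (derivative (nodal s v)).eval x = (nodal s v).eval x * ∑ j ∈ s, 1 / (x - v j) := by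
  simpa [← nodal_eq] using eval_derivative_prod_X_sub_C_pow s v (fun _ => 1) hx

end LogDeriv

section DoubleNodes

variable {K : Type*} [Field K] {k : ℕ} (t : Fin k → K)

/-- The residue at `t i` of `F / (∏_q (X - t q))²`: the derivative at `t i` of `F / uᵢ²`, where
`uᵢ = ∏_{q ≠ i} (X - t q)`. -/
noncomputable def nodalSqResidue (F : K[X]) (i : Fin k) : K :=
  (F.derivative.eval (t i) * (nodal (univ.erase i) t).eval (t i)
      - 2 * F.eval (t i) * (nodal (univ.erase i) t).derivative.eval (t i))
    / (nodal (univ.erase i) t).eval (t i) ^ 3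

variable {t}

theorem eval_nodal_erase_ne_zero (ht : Function.Injective t) (i : Fin k) :
    (nodal (univ.erase i) t).eval (t i) ≠ 0 :=
  eval_nodal_not_at_node fun _ hq => ht.ne (ne_of_mem_erase hq).symm

theorem eval_nodal_erase_eq_zero {i j : Fin k} (hij : i ≠ j) :
    (nodal (univ.erase i) t).eval (t j) = 0 :=
  eval_nodal_at_node (mem_erase.2 ⟨hij.symm, mem_univ j⟩)

theorem eval_mul_nodal_erase_sq_eq_zero (L : K[X]) {i j : Fin k} (hij : i ≠ j) :
    (L * nodal (univ.erase i) t ^ 2).eval (t j) = 0 ∧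
      (derivative (L * nodal (univ.erase i) t ^ 2)).eval (t j) = 0 := by
  simp [eval_nodal_erase_eq_zero hij, derivative_mul, derivative_pow]

theorem eq_zero_of_natDegree_lt_of_isRoot_derivative (ht : Function.Injective t) {F : K[X]}
    (hF : F.natDegree < 2 * k) (h₀ : ∀ i, F.IsRoot (t i)) (h₁ : ∀ i, F.derivative.IsRoot (t i)) :
    F = 0 := by
  by_contra hF0
  have hdvd : ∏ i, (X - C (t i)) ^ 2 ∣ F := by
    refine prod_dvd_of_coprime (fun i _ j _ hij => ?_) fun i _ => ?_
    · exact (isCoprime_X_sub_C_of_isUnit_sub (sub_ne_zero.2 (ht.ne hij)).isUnit).pow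
    · exact (le_rootMultiplicity_iff hF0).1
        ((one_lt_rootMultiplicity_iff_isRoot hF0).2 ⟨h₀ i, h₁ i⟩)
  have hdeg := natDegree_le_of_dvd hdvd hF0
  rw [prod_pow, ← nodal_eq, natDegree_pow, natDegree_nodal, card_univ, Fintype.card_fin] at hdeg
  omega

theorem coeff_eq_sum_nodalSqResidue (ht : Function.Injective t) {F : K[X]}
    (hF : F.natDegree < 2 * k) :
    F.coeff (2 * k - 1) = ∑ i, nodalSqResidue t F i := by
  set u : Fin k → K[X] := fun i => nodal (univ.erase i) t
  -- `∑ i, L i * u i ^ 2` is the Hermite interpolant of `F` at the double nodes.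
  set L : Fin k → K[X] := fun i =>
    C (F.eval (t i) / (u i).eval (t i) ^ 2) + C (nodalSqResidue t F i) * (X - C (t i))
  have hu : ∀ i, (u i).natDegree = k - 1 := fun i => by
    simp [u, natDegree_nodal, card_erase_of_mem]
  have hL : ∀ i, (L i).natDegree ≤ 1 := fun i => by
    simp only [L]
    compute_degree
  have hF_eq : F = ∑ i, L i * u i ^ 2 := by
    refine sub_eq_zero.1 (eq_zero_of_natDegree_lt_of_isRoot_derivative ht ?_ (fun j => ?_)
      (fun j => ?_))
    · refine (natDegree_sub_le _ _).trans_lt (max_lt hF ?_)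
      refine (natDegree_sum_le_of_forall_le _ _ fun i _ => natDegree_mul_le.trans ?_).trans_lt
        (show 1 + 2 * (k - 1) < 2 * k by omega)
      rw [natDegree_pow, hu]
      exact Nat.add_le_add_right (hL i) _
    · rw [IsRoot, eval_sub, eval_finsetSum,
        sum_eq_single_of_mem j (mem_univ j)
          (fun i _ hij => (eval_mul_nodal_erase_sq_eq_zero (L i) hij).1), sub_eq_zero]
      have hu₀ := eval_nodal_erase_ne_zero ht j
      simp only [L, u, eval_mul, eval_add, eval_C, eval_sub, eval_X, eval_pow, sub_self, mul_zero,
        add_zero]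
      field_simp
    · rw [IsRoot, derivative_sub, derivative_sum, eval_sub, eval_finsetSum,
        sum_eq_single_of_mem j (mem_univ j)
          (fun i _ hij => (eval_mul_nodal_erase_sq_eq_zero (L i) hij).2), sub_eq_zero]
      have hu₀ := eval_nodal_erase_ne_zero ht j
      simp only [L, u, nodalSqResidue, derivative_mul, derivative_pow, derivative_add,
        derivative_C, derivative_sub, derivative_X, eval_mul, eval_add, eval_C, eval_sub, eval_X,
        eval_pow, sub_self, eval_zero, eval_one]
      field_simp
      ring
  conv_lhs => rw [hF_eq, finsetSum_coeff]
  refine sum_congr rfl fun i _ => ?_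
  have hlead : (u i ^ 2).coeff (2 * (k - 1)) = 1 := by
    rw [← hu i, ← natDegree_pow]
    exact (nodal_monic.pow 2).coeff_natDegree
  rw [show 2 * k - 1 = 1 + 2 * (k - 1) by omega,
    coeff_mul_add_eq_of_natDegree_le (hL i) (by rw [natDegree_pow, hu]), hlead]
  simp [L]

theorem nodalSqResidue_mul (q F : K[X]) (i : Fin k) :
    nodalSqResidue t (q * F) i =
      q.derivative.eval (t i) * F.eval (t i) / (nodal (univ.erase i) t).eval (t i) ^ 2
        + q.eval (t i) * nodalSqResidue t F i := by
  unfold nodalSqResidue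
  rcases eq_or_ne ((nodal (univ.erase i) t).eval (t i)) 0 with h | h
  · simp [h]
  · rw [derivative_mul, eval_add, eval_mul, eval_mul, eval_mul]
    field_simp
    ring

theorem exists_nodalSqResidue_ne_zero_of_natDegree_add_one_eq (ht : Function.Injective t)
    {F : K[X]} (hF0 : F ≠ 0) (hF : F.natDegree + 1 = 2 * k) :
    ∃ i, nodalSqResidue t F i ≠ 0 := by
  by_contra! h
  have hcoeff := coeff_eq_sum_nodalSqResidue ht (F := F) (by omega)
  rw [sum_eq_zero fun i _ => h i, show 2 * k - 1 = F.natDegree by omega] at hcoeff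
  exact hF0 (leadingCoeff_eq_zero.1 hcoeff)

theorem exists_nodalSqResidue_ne_zero_of_natDegree_add_one_lt [CharZero K]
    (ht : Function.Injective t) {F : K[X]} (hF : F.natDegree + 1 < k)
    (hFt : ∀ i, F.eval (t i) ≠ 0) :
    ∃ i, nodalSqResidue t F i ≠ 0 := by
  by_contra! h
  set c : Fin k → K := fun i => F.eval (t i) / (nodal (univ.erase i) t).eval (t i) ^ 2
  have hpow : ∀ r : Fin k, ∑ i, c i * t i ^ (r : ℕ) = 0 := by
    intro r
    have hdeg : (X ^ ((r : ℕ) + 1) * F).natDegree < 2 * k - 1 :=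
      natDegree_mul_le.trans_lt (by rw [natDegree_X_pow]; omega)
    have hcoeff := coeff_eq_sum_nodalSqResidue ht (F := X ^ ((r : ℕ) + 1) * F) (by omega)
    simp only [coeff_eq_zero_of_natDegree_lt hdeg, nodalSqResidue_mul, h, mul_zero, add_zero,
      derivative_X_pow, eval_mul, eval_C, eval_pow, eval_X, Nat.add_sub_cancel] at hcoeff
    have hr : ((r : ℕ) + 1 : K) ≠ 0 := Nat.cast_add_one_ne_zero _
    rw [← mul_right_inj' hr, mul_zero, hcoeff, mul_sum]
    refine sum_congr rfl fun i _ => ?_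
    push_cast
    ring
  have hc := Matrix.eq_zero_of_forall_pow_sum_mul_pow_eq_zero ht hpow
  let i : Fin k := ⟨0, by omega⟩
  exact div_ne_zero (hFt i) (pow_ne_zero _ (eval_nodal_erase_ne_zero ht i)) (congrFun hc i)

theorem nodalSqResidue_prod_X_sub_C_pow_eq_zero {n : ℕ} (m : Fin n → ℕ) (z : Fin n → K)
    (ht : Function.Injective t) {i : Fin k} (hz : ∀ j, t i ≠ z j)
    (hcrit : -(∑ j, (m j : K) / (t i - z j)) + ∑ q ∈ univ.erase i, 2 / (t i - t q) = 0) :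
    nodalSqResidue t (∏ j, (X - C (z j)) ^ m j) i = 0 := by
  have h2 : ∑ q ∈ univ.erase i, (2 : K) / (t i - t q) =
      2 * ∑ q ∈ univ.erase i, 1 / (t i - t q) := by
    simp_rw [mul_sum, mul_one_div]
  rw [nodalSqResidue, eval_derivative_prod_X_sub_C_pow _ _ _ fun j _ => hz j,
    eval_derivative_nodal _ _ fun q hq => ht.ne (ne_of_mem_erase hq).symm, div_eq_zero_iff]
  left
  set A := (∏ j, (X - C (z j)) ^ m j).eval (t i) * (nodal (univ.erase i) t).eval (t i)
  linear_combination (-A) * hcrit + A * h2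

end DoubleNodes

theorem master_function_no_critical_points_general (k n : ℕ)
    (m : Fin n → ℕ)
    (hm : (∑ j, (m j : ℤ)) - k + 1 = k ∨ (∑ j, (m j : ℤ)) - k + 1 < 0)
    (z : Fin n → ℂ)
    (t : Fin k → ℂ) (ht1 : ∀ i j, t i ≠ z j) (ht2 : ∀ p q, p ≠ q → t p ≠ t q) :
    ∃ i : Fin k,
      -(∑ j, (m j : ℂ) / (t i - z j)) + ∑ q ∈ Finset.univ.erase i, 2 / (t i - t q) ≠ 0 := by
  have ht : Function.Injective t := fun p q h => by_contra fun hpq => ht2 p q hpq h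
  set T : ℂ[X] := ∏ j, (X - C (z j)) ^ m j
  have hT : T.Monic := monic_prod_of_monic _ _ fun j _ => (monic_X_sub_C _).pow _
  have hTdeg : (T.natDegree : ℤ) = ∑ j, (m j : ℤ) := by
    simp [T, natDegree_prod_of_monic _ _ fun j _ => (monic_X_sub_C (z j)).pow (m j)]
  suffices ∃ i, nodalSqResidue t T i ≠ 0 by
    obtain ⟨i, hi⟩ := this
    exact ⟨i, fun hcrit => hi (nodalSqResidue_prod_X_sub_C_pow_eq_zero m z ht (ht1 i) hcrit)⟩
  rcases hm with hm | hm
  · exact exists_nodalSqResidue_ne_zero_of_natDegree_add_one_eq ht hT.ne_zero (by omega)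
  · refine exists_nodalSqResidue_ne_zero_of_natDegree_add_one_lt ht (by omega) fun i => ?_
    simp only [T, eval_prod, eval_pow, eval_sub, eval_X, eval_C]
    exact prod_ne_zero_iff.2 fun j _ => pow_ne_zero _ (sub_ne_zero.2 (ht1 i j))

/-- If `|m| − k + 1 = k` or `|m| − k + 1 < 0`, then for any pairwise distinct
`z_1,…,z_n`, the master function `Φ_{k,n}(t;z,m)` has no critical points in the
complement `X` of the discriminantal arrangement: at every point `t ∈ X` some
logarithmic partial derivative `−∑ⱼ mⱼ/(tᵢ−zⱼ) + ∑_{q≠i} 2/(tᵢ−t_q)` is nonzero. -/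
theorem master_function_no_critical_points (k n : ℕ) (hk : 1 ≤ k) (hn : 1 ≤ n)
    (m : Fin n → ℕ)
    (hm : (∑ j, (m j : ℤ)) - k + 1 = k ∨ (∑ j, (m j : ℤ)) - k + 1 < 0)
    (z : Fin n → ℂ) (hz : ∀ j j', j ≠ j' → z j ≠ z j')
    (t : Fin k → ℂ) (ht1 : ∀ i j, t i ≠ z j) (ht2 : ∀ p q, p ≠ q → t p ≠ t q) :
    ∃ i : Fin k,
      -(∑ j, (m j : ℂ) / (t i - z j)) + ∑ q ∈ Finset.univ.erase i, 2 / (t i - t q) ≠ 0 :=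
  master_function_no_critical_points_general k n m hm z t ht1 ht2
end
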